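/- arXiv:2210.08371 — 8 statements merged into one kernel-verified Lean document; each statement's English description precedes it below -/
import Mathlib

section
/- Let f : ℝ^d → ℝ be L-smooth and μ-strongly convex with μ > 0 and minimizer w*. Run the sketched gradient-descent iteration w^{t+1} = w^t − η·D_t(∇f(w^t)) with step size 0 < η ≤ 1/((1+α)L). Then for every t ≥ 0, E[f(w^t)] − f(w*) ≤ (1 − μη)^t · (f(w^0) − f(w*)). -/
open MeasureTheory ProbabilityTheory
open scoped RealInnerProductSpace

open scoped RealInnerProductSpace

theorem my_descent {E : Type*} [NormedAddCommGroup E] [InnerProductSpace ℝ E] [CompleteSpace E]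
    (f : E → ℝ) (L : ℝ) (hdiff : Differentiable ℝ f) (hL : 0 ≤ L)
    (hsmooth : ∀ x y : E, ‖gradient f x - gradient f y‖ ≤ L * ‖x - y‖)
    (x v : E) : f (x + v) ≤ f x + ⟪gradient f x, v⟫ + L / 2 * ‖v‖ ^ 2 := by
  have hgc : Continuous (fun y => gradient f y) :=
    (LipschitzWith.of_dist_le_mul (K := ⟨L, hL⟩) (fun a b => by
        rw [dist_eq_norm, dist_eq_norm]; exact hsmooth a b)).continuous
  have hd : ∀ t : ℝ, HasDerivAt (fun s : ℝ => f (x + s • v)) ⟪gradient f (x + t • v), v⟫ t := by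
    intro t
    have h1 : HasDerivAt (fun s : ℝ => x + s • v) v t := by
      simpa using ((hasDerivAt_id t).smul_const v).const_add x
    have h2 := (hdiff (x + t • v)).hasGradientAt.hasFDerivAt
    have h3 := h2.comp_hasDerivAt t h1
    simpa [InnerProductSpace.toDual_apply_apply, real_inner_comm, Function.comp_def] using h3
  have hcont : Continuous (fun t : ℝ => ⟪gradient f (x + t • v), v⟫) := by
    exact (continuous_inner.comp ((hgc.comp (by continuity)).prodMk continuous_const))
  have key : f (x + v) - f x = ∫ t in (0:ℝ)..1, ⟪gradient f (x + t • v), v⟫ := by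
    rw [intervalIntegral.integral_eq_sub_of_hasDerivAt (fun t _ => hd t)
      (hcont.intervalIntegrable 0 1)]
    simp
  have hb : ∀ t ∈ Set.Icc (0:ℝ) 1, ⟪gradient f (x + t • v), v⟫ ≤ ⟪gradient f x, v⟫ + L * t * ‖v‖ ^ 2 := by
    intro t ht
    have : ⟪gradient f (x + t • v) - gradient f x, v⟫ ≤ ‖gradient f (x + t • v) - gradient f x‖ * ‖v‖ :=
      real_inner_le_norm _ _
    have h2 : ‖gradient f (x + t • v) - gradient f x‖ ≤ L * (t * ‖v‖) := by
      have := hsmooth (x + t • v) x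
      simpa [norm_smul, abs_of_nonneg ht.1, mul_assoc] using this
    have h3 : ⟪gradient f (x + t • v) - gradient f x, v⟫ ≤ L * t * ‖v‖ ^ 2 := by
      calc ⟪gradient f (x + t • v) - gradient f x, v⟫ ≤ _ := this
        _ ≤ L * (t * ‖v‖) * ‖v‖ := by
            apply mul_le_mul_of_nonneg_right h2 (norm_nonneg v)
        _ = L * t * ‖v‖ ^ 2 := by ring
    have := inner_sub_left (𝕜 := ℝ) (gradient f (x + t • v)) (gradient f x) v
    linarith [this ▸ h3]
  have hint : ∫ t in (0:ℝ)..1, ⟪gradient f (x + t • v), v⟫ ≤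
      ∫ t in (0:ℝ)..1, (⟪gradient f x, v⟫ + L * t * ‖v‖ ^ 2) := by
    apply intervalIntegral.integral_mono_on (by norm_num)
      (hcont.intervalIntegrable 0 1) (by apply Continuous.intervalIntegrable; continuity) hb
  have hrhs : ∫ t in (0:ℝ)..1, (⟪gradient f x, v⟫ + L * t * ‖v‖ ^ 2) =
      ⟪gradient f x, v⟫ + L / 2 * ‖v‖ ^ 2 := by
    rw [intervalIntegral.integral_add (by apply Continuous.intervalIntegrable; continuity)
      (by apply Continuous.intervalIntegrable; continuity)]
    have h1 : ∫ t in (0:ℝ)..1, (⟪gradient f x, v⟫ : ℝ) = ⟪gradient f x, v⟫ := by simp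
    have h2 : ∫ t in (0:ℝ)..1, L * t * ‖v‖ ^ 2 = L / 2 * ‖v‖ ^ 2 := by
      rw [intervalIntegral.integral_mul_const, intervalIntegral.integral_const_mul]
      rw [integral_id]
      ring
    rw [h1, h2]
  linarith [key ▸ hint, hrhs ▸ hint]


theorem my_pl {E : Type*} [NormedAddCommGroup E] [InnerProductSpace ℝ E] [CompleteSpace E]
    (f : E → ℝ) (mus : ℝ) (wstar : E) (hmus : 0 < mus)
    (hsc : ∀ x y : E, f y ≥ f x + ⟪gradient f x, y - x⟫ + mus / 2 * ‖y - x‖ ^ 2) :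
    ∀ y, 2 * mus * (f y - f wstar) ≤ ‖gradient f y‖ ^ 2 := by
  intro y
  have h := hsc y wstar
  set g := gradient f y
  have h1 : ⟪g, wstar - y⟫ ≥ -(‖g‖ * ‖wstar - y‖) := by
    have := real_inner_le_norm g (y - wstar)
    rw [norm_sub_rev] at this
    have e : ⟪g, y - wstar⟫ = -⟪g, wstar - y⟫ := by
      rw [← inner_neg_right]; congr 1; abel
    nlinarith [this]
  nlinarith [sq_nonneg (mus * ‖wstar - y‖ - ‖g‖), norm_nonneg (wstar - y), norm_nonneg g]


theorem my_step_fixed {E : Type*} [NormedAddCommGroup E] [InnerProductSpace ℝ E] [CompleteSpace E]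
    [MeasurableSpace E] [BorelSpace E]
    {Ω : Type*} [MeasurableSpace Ω] (μ : Measure Ω) [IsProbabilityMeasure μ]
    (f : E → ℝ) (L mus α η : ℝ) (wstar y : E) (Dh : Ω → E)
    (hL : 0 < L) (hmus : 0 < mus) (hα : 0 ≤ α)
    (hη0 : 0 < η) (hη : η ≤ 1 / ((1 + α) * L))
    (hdescent : ∀ x v : E, f (x + v) ≤ f x + ⟪gradient f x, v⟫ + L / 2 * ‖v‖ ^ 2)
    (hgrow : ∀ x : E, f wstar + mus / 2 * ‖x - wstar‖ ^ 2 ≤ f x)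
    (hm : Measurable Dh)
    (hunb : ∫ ω, Dh ω ∂μ = gradient f y)
    (hmom : ∫ ω, ‖Dh ω‖ ^ 2 ∂μ ≤ (1 + α) * ‖gradient f y‖ ^ 2)
    (hzero : gradient f y = 0 → ∀ ω, Dh ω = 0)
    (hintf : Integrable (fun ω => f (y - η • Dh ω)) μ) :
    ∫ ω, f (y - η • Dh ω) ∂μ ≤ f y - η / 2 * ‖gradient f y‖ ^ 2 := by
  set h : E := gradient f y with hh
  -- integrability of Dh
  have hDint : Integrable Dh μ := by
    by_cases hc : h = 0
    · have : Dh = fun _ => 0 := funext (hzero hc)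
      rw [this]; exact integrable_const 0
    · by_contra hni
      rw [integral_undef hni] at hunb
      exact hc hunb.symm
  -- integrability of ‖Dh‖²
  have hsqint : Integrable (fun ω => ‖Dh ω‖ ^ 2) μ := by
    have hbound : Integrable (fun ω =>
        4 / (mus * η ^ 2) * (f (y - η • Dh ω) - f wstar) + 2 / η ^ 2 * ‖y - wstar‖ ^ 2) μ := by
      apply Integrable.add _ (integrable_const _)
      exact ((hintf.sub (integrable_const _)).const_mul _)
    refine hbound.mono' ((hm.norm.pow_const 2).aestronglyMeasurable) ?_
    filter_upwards with ω
    rw [Real.norm_eq_abs, abs_of_nonneg (by positivity)]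
    have hg := hgrow (y - η • Dh ω)
    have h1 : ‖η • Dh ω‖ ≤ ‖y - wstar‖ + ‖(y - η • Dh ω) - wstar‖ := by
      have e : η • Dh ω = (y - wstar) - ((y - η • Dh ω) - wstar) := by abel
      calc ‖η • Dh ω‖ = ‖(y - wstar) - ((y - η • Dh ω) - wstar)‖ := by rw [← e]
        _ ≤ ‖y - wstar‖ + ‖(y - η • Dh ω) - wstar‖ := norm_sub_le _ _
    have h2 : ‖η • Dh ω‖ ^ 2 ≤ 2 * ‖(y - η • Dh ω) - wstar‖ ^ 2 + 2 * ‖y - wstar‖ ^ 2 := by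
      nlinarith [h1, norm_nonneg (η • Dh ω), norm_nonneg ((y - η • Dh ω) - wstar), norm_nonneg (y - wstar), sq_nonneg (‖(y - η • Dh ω) - wstar‖ - ‖y - wstar‖)]
    have h3 : ‖η • Dh ω‖ ^ 2 = η ^ 2 * ‖Dh ω‖ ^ 2 := by
      rw [norm_smul, mul_pow, Real.norm_eq_abs, sq_abs]
    have h4 : ‖(y - η • Dh ω) - wstar‖ ^ 2 ≤ 2 / mus * (f (y - η • Dh ω) - f wstar) := by
      rw [div_mul_eq_mul_div, le_div_iff₀ hmus]; nlinarith
    rw [h3] at h2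
    have hη2 : (0:ℝ) < η ^ 2 := by positivity
    rw [← mul_le_mul_iff_right₀ hη2]
    calc η ^ 2 * ‖Dh ω‖ ^ 2 ≤ 2 * ‖(y - η • Dh ω) - wstar‖ ^ 2 + 2 * ‖y - wstar‖ ^ 2 := h2
      _ ≤ 2 * (2 / mus * (f (y - η • Dh ω) - f wstar)) + 2 * ‖y - wstar‖ ^ 2 := by linarith
      _ = η ^ 2 * (4 / (mus * η ^ 2) * (f (y - η • Dh ω) - f wstar) + 2 / η ^ 2 * ‖y - wstar‖ ^ 2) := by
          field_simp
          ring
  -- inner product integrable and its integral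
  have hinn : Integrable (fun ω => ⟪h, Dh ω⟫) μ :=
    ContinuousLinearMap.integrable_comp (innerSL ℝ h) hDint
  have hinnint : ∫ ω, ⟪h, Dh ω⟫ ∂μ = ‖h‖ ^ 2 := by
    have h5 := (innerSL ℝ h).integral_comp_comm hDint
    simp only [innerSL_apply_apply] at h5
    rw [h5, hunb, real_inner_self_eq_norm_sq]
  -- pointwise descent
  have hpt : ∀ ω, f (y - η • Dh ω) ≤ f y - η * ⟪h, Dh ω⟫ + L / 2 * η ^ 2 * ‖Dh ω‖ ^ 2 := by
    intro ω
    have := hdescent y (-(η • Dh ω))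
    have e1 : y + -(η • Dh ω) = y - η • Dh ω := by abel
    have e2 : ⟪h, -(η • Dh ω)⟫ = -(η * ⟪h, Dh ω⟫) := by
      rw [inner_neg_right, real_inner_smul_right]
    have e3 : ‖-(η • Dh ω)‖ ^ 2 = η ^ 2 * ‖Dh ω‖ ^ 2 := by
      rw [norm_neg, norm_smul, mul_pow, Real.norm_eq_abs, sq_abs]
    rw [e1, e2, e3] at this
    linarith
  -- integrate
  have hRint : Integrable (fun ω => f y - η * ⟪h, Dh ω⟫ + L / 2 * η ^ 2 * ‖Dh ω‖ ^ 2) μ :=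
    ((integrable_const _).sub (hinn.const_mul _)).add (hsqint.const_mul _)
  have hmono := integral_mono hintf hRint (fun ω => hpt ω)
  have i1 : Integrable (fun ω => f y - η * ⟪h, Dh ω⟫) μ := (integrable_const _).sub (hinn.const_mul _)
  have i2 : Integrable (fun ω => L / 2 * η ^ 2 * ‖Dh ω‖ ^ 2) μ := hsqint.const_mul _
  have hsplit : ∫ ω, (f y - η * ⟪h, Dh ω⟫ + L / 2 * η ^ 2 * ‖Dh ω‖ ^ 2) ∂μ
      = f y - η * ‖h‖ ^ 2 + L / 2 * η ^ 2 * ∫ ω, ‖Dh ω‖ ^ 2 ∂μ := by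
    rw [integral_add i1 i2, integral_sub (integrable_const _) (hinn.const_mul _),
      integral_const_mul, integral_const_mul, hinnint, integral_const]
    simp
  rw [hsplit] at hmono
  have this := hmono
  have hmom' : L / 2 * η ^ 2 * ∫ ω, ‖Dh ω‖ ^ 2 ∂μ ≤ L / 2 * η ^ 2 * ((1 + α) * ‖h‖ ^ 2) := by
    apply mul_le_mul_of_nonneg_left hmom (by positivity)
  have hstep : η * ((1 + α) * L) ≤ 1 := by
    have hpos : (0:ℝ) < (1 + α) * L := by positivity
    exact (le_div_iff₀ hpos).1 hη
  have : ∫ ω, f (y - η • Dh ω) ∂μ ≤ f y - η * ‖h‖ ^ 2 + L / 2 * η ^ 2 * ((1 + α) * ‖h‖ ^ 2) := by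
    linarith
  have hfin : L / 2 * η ^ 2 * ((1 + α) * ‖h‖ ^ 2) ≤ η / 2 * ‖h‖ ^ 2 := by
    have hn : (0:ℝ) ≤ ‖h‖ ^ 2 := by positivity
    have : η * ((1 + α) * L) * (η / 2 * ‖h‖ ^ 2) ≤ 1 * (η / 2 * ‖h‖ ^ 2) := by
      apply mul_le_mul_of_nonneg_right hstep (by positivity)
    nlinarith
  linarith

/-- Sketched gradient descent on an `L`-smooth, `μ`-strongly convex function with
α-compressors: linear convergence of the expected optimality gap. -/
theorem sketched_gd_strongly_convex
    {E : Type*} [NormedAddCommGroup E] [InnerProductSpace ℝ E]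
    [FiniteDimensional ℝ E] [MeasurableSpace E] [BorelSpace E]
    {Ω : Type*} [MeasurableSpace Ω] (μ : Measure Ω) [IsProbabilityMeasure μ]
    (f : E → ℝ) (L mus α η : ℝ) (wstar w0 : E)
    (D : ℕ → Ω → E → E) (w : ℕ → Ω → E)
    (hdiff : Differentiable ℝ f)
    (hL : 0 < L)
    (hsmooth : ∀ x y : E, ‖gradient f x - gradient f y‖ ≤ L * ‖x - y‖)
    (hmus : 0 < mus)
    (hsc : ∀ x y : E, f y ≥ f x + ⟪gradient f x, y - x⟫ + mus / 2 * ‖y - x‖ ^ 2)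
    (hmin : ∀ x, f wstar ≤ f x)
    (hα : 0 ≤ α)
    (hlin : ∀ t ω, IsLinearMap ℝ (D t ω))
    (hDmeas : ∀ t (h : E), Measurable fun ω => D t ω h)
    (hunbiased : ∀ t (h : E), ∫ ω, D t ω h ∂μ = h)
    (hmoment : ∀ t (h : E), ∫ ω, ‖D t ω h‖ ^ 2 ∂μ ≤ (1 + α) * ‖h‖ ^ 2)
    (hwmeas : ∀ t, Measurable (w t))
    (hindep : ∀ t : ℕ,
      IndepFun (fun ω => D t ω) (fun ω => fun s : Fin (t + 1) => w s ω) μ)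
    (hw0 : ∀ ω, w 0 ω = w0)
    (hiter : ∀ t ω, w (t + 1) ω = w t ω - η • D t ω (gradient f (w t ω)))
    (hη0 : 0 < η) (hη : η ≤ 1 / ((1 + α) * L))
    (hint : ∀ t, Integrable (fun ω => f (w t ω)) μ) :
    ∀ t : ℕ, (∫ ω, f (w t ω) ∂μ) - f wstar ≤ (1 - mus * η) ^ t * (f w0 - f wstar) := by
  rcases subsingleton_or_nontrivial E with hE | hE
  · -- degenerate case: E is a single point
    intro t
    have h1 : wstar = w0 := Subsingleton.elim _ _
    have h2 : (fun ω => f (w t ω)) = fun _ => f w0 := by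
      funext ω; congr 1; exact Subsingleton.elim _ _
    rw [h2, integral_const]
    simp [h1]
  -- continuity facts
  have hfc : Continuous f := hdiff.continuous
  have hgc : Continuous (fun y => gradient f y) :=
    (LipschitzWith.of_dist_le_mul (K := ⟨L, hL.le⟩) (fun a b => by
        rw [dist_eq_norm, dist_eq_norm]; exact hsmooth a b)).continuous
  have hdescent : ∀ x v : E, f (x + v) ≤ f x + ⟪gradient f x, v⟫ + L / 2 * ‖v‖ ^ 2 :=
    my_descent f L hdiff hL.le hsmooth
  have hpl : ∀ y, 2 * mus * (f y - f wstar) ≤ ‖gradient f y‖ ^ 2 :=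
    my_pl f mus wstar hmus hsc
  have hgradstar : gradient f wstar = 0 := by
    have hloc : IsLocalMin f wstar := Filter.Eventually.of_forall hmin
    have := hloc.fderiv_eq_zero
    rw [gradient, this]
    simp
  have hgrow : ∀ x : E, f wstar + mus / 2 * ‖x - wstar‖ ^ 2 ≤ f x := by
    intro x
    have := hsc wstar x
    rw [hgradstar] at this
    simpa using this
  -- mus ≤ L hence mus * η ≤ 1
  have hfactor : 0 ≤ 1 - mus * η := by
    obtain ⟨v, hv⟩ := exists_ne (0 : E)
    have hvn : 0 < ‖v‖ := norm_pos_iff.2 hv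
    have h1 := hsc 0 v
    have h2 := hdescent 0 v
    rw [zero_add] at h2
    have e : v - 0 = v := by abel
    rw [e] at h1
    have hML : mus ≤ L := by nlinarith [pow_pos hvn 2]
    have h3 : η * ((1 + α) * L) ≤ 1 := by
      have hpos : (0:ℝ) < (1 + α) * L := by positivity
      exact (le_div_iff₀ hpos).1 hη
    nlinarith [mul_le_mul_of_nonneg_right hML hη0.le, mul_nonneg hα (mul_pos hL hη0).le]
  -- gap nonnegativity
  have hgap : ∀ t, f wstar ≤ ∫ ω, f (w t ω) ∂μ := by
    intro t
    have := integral_mono (integrable_const (f wstar)) (hint t) (fun ω => hmin (w t ω))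
    rwa [integral_const, probReal_univ, one_smul] at this
  -- the one-step inequality
  have honestep : ∀ t : ℕ, ∫ ω, f (w (t + 1) ω) ∂μ ≤
      (1 - mus * η) * ∫ ω, f (w t ω) ∂μ + mus * η * f wstar := by
    intro t
    set b := stdOrthonormalBasis ℝ E with hb
    set X : Ω → (Fin (Module.finrank ℝ E) → E) := fun ω i => D t ω (b i) with hXdef
    have hXm : Measurable X := measurable_pi_lambda _ fun i => hDmeas t (b i)
    have hYm : Measurable (w t) := hwmeas t
    haveI hPX : IsProbabilityMeasure (μ.map X) := Measure.isProbabilityMeasure_map hXm.aemeasurable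
    haveI hPY : IsProbabilityMeasure (μ.map (w t)) := Measure.isProbabilityMeasure_map hYm.aemeasurable
    -- independence of X and w t
    have hXY : IndepFun X (w t) μ := by
      have hφ : Measurable (fun g : E → E => fun i : Fin (Module.finrank ℝ E) => g (b i)) :=
        measurable_pi_lambda _ fun i => measurable_pi_apply (b i)
      have hψ : Measurable (fun v : Fin (t + 1) → E => v (Fin.last t)) := measurable_pi_apply _
      have hcomp := (hindep t).comp hφ hψ
      have e1 : ((fun g : E → E => fun i : Fin (Module.finrank ℝ E) => g (b i)) ∘ fun ω => D t ω) = X := rfl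
      have e2 : ((fun v : Fin (t + 1) → E => v (Fin.last t)) ∘ fun ω => fun s : Fin (t + 1) => w s ω)
          = w t := by
        funext ω
        simp [Function.comp, Fin.val_last]
      rwa [e1, e2] at hcomp
    have hmap : μ.map (fun ω => (X ω, w t ω)) = (μ.map X).prod (μ.map (w t)) :=
      (indepFun_iff_map_prod_eq_prod_map_map hXm.aemeasurable hYm.aemeasurable).1 hXY
    -- the function F
    set F : (Fin (Module.finrank ℝ E) → E) × E → ℝ :=
      fun p => f (p.2 - η • ∑ i, ⟪b i, gradient f p.2⟫ • p.1 i) with hF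
    have hFc : Continuous F := by
      apply hfc.comp
      refine Continuous.sub continuous_snd (Continuous.const_smul ?_ η)
      refine continuous_finset_sum _ fun i _ => Continuous.smul ?_ ?_
      · exact Continuous.inner continuous_const (hgc.comp continuous_snd)
      · exact (continuous_apply i).comp continuous_fst
    -- pointwise identity via linearity
    have hkey : ∀ ω (y : E), (∑ i, ⟪b i, gradient f y⟫ • X ω i) = D t ω (gradient f y) := by
      intro ω y
      have hl := hlin t ω
      calc ∑ i, ⟪b i, gradient f y⟫ • X ω i
          = ∑ i, D t ω (⟪b i, gradient f y⟫ • b i) := by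
            refine Finset.sum_congr rfl fun i _ => ?_
            rw [hl.map_smul]
        _ = D t ω (∑ i, ⟪b i, gradient f y⟫ • b i) := by
            exact (map_sum (IsLinearMap.mk' (D t ω) hl)
              (fun i => ⟪b i, gradient f y⟫ • b i) Finset.univ).symm
        _ = D t ω (gradient f y) := by rw [b.sum_repr']
    have hFXw : ∀ ω, F (X ω, w t ω) = f (w (t + 1) ω) := by
      intro ω
      rw [hiter t ω]
      simp only [hF]
      rw [hkey ω (w t ω)]
    -- integrability of F on the product measure
    have hFint : Integrable F ((μ.map X).prod (μ.map (w t))) := by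
      rw [← hmap, integrable_map_measure hFc.aestronglyMeasurable (hXm.prodMk hYm).aemeasurable]
      have e : (F ∘ fun ω => (X ω, w t ω)) = fun ω => f (w (t + 1) ω) := funext fun ω => hFXw ω
      rw [e]
      exact hint (t + 1)
    -- Fubini
    have h1 : ∫ ω, f (w (t + 1) ω) ∂μ = ∫ y, ∫ M, F (M, y) ∂(μ.map X) ∂(μ.map (w t)) := by
      rw [← integral_prod_symm F hFint, ← hmap,
        integral_map (hXm.prodMk hYm).aemeasurable hFc.aestronglyMeasurable]
      exact integral_congr_ae (Filter.Eventually.of_forall fun ω => (hFXw ω).symm)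
    -- a.e. bound on inner integral
    have hae : ∀ᵐ y ∂(μ.map (w t)), ∫ M, F (M, y) ∂(μ.map X) ≤
        (1 - mus * η) * f y + mus * η * f wstar := by
      filter_upwards [hFint.prod_left_ae] with y hy
      have hsec : Continuous (fun M : Fin (Module.finrank ℝ E) → E => F (M, y)) :=
        hFc.comp (continuous_id.prodMk continuous_const)
      have hpull : ∫ M, F (M, y) ∂(μ.map X) = ∫ ω, f (y - η • D t ω (gradient f y)) ∂μ := by
        rw [integral_map hXm.aemeasurable hsec.aestronglyMeasurable]
        exact integral_congr_ae (Filter.Eventually.of_forall fun ω => by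
          simp only [hF]
          rw [hkey ω y])
      have hintf : Integrable (fun ω => f (y - η • D t ω (gradient f y))) μ := by
        have h2 := (integrable_map_measure hsec.aestronglyMeasurable hXm.aemeasurable).1 hy
        refine h2.congr (Filter.Eventually.of_forall fun ω => ?_)
        simp only [Function.comp, hF]
        rw [hkey ω y]
      have hstep := my_step_fixed μ f L mus α η wstar y (fun ω => D t ω (gradient f y))
        hL hmus hα hη0 hη hdescent hgrow (hDmeas t _) (hunbiased t _) (hmoment t _)
        (fun hz ω => by rw [hz]; exact (hlin t ω).map_zero) hintf
      rw [hpull]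
      have hply := hpl y
      have hn : (0:ℝ) ≤ ‖gradient f y‖ ^ 2 := by positivity
      nlinarith [hstep]
    -- integrate the bound
    have hIy : Integrable (fun y => ∫ M, F (M, y) ∂(μ.map X)) (μ.map (w t)) :=
      hFint.integral_prod_right
    have hgcont : Continuous (fun y => (1 - mus * η) * f y + mus * η * f wstar) :=
      (continuous_const.mul hfc).add continuous_const
    have hRy : Integrable (fun y => (1 - mus * η) * f y + mus * η * f wstar) (μ.map (w t)) := by
      rw [integrable_map_measure hgcont.aestronglyMeasurable hYm.aemeasurable]
      have e : ((fun y => (1 - mus * η) * f y + mus * η * f wstar) ∘ (w t))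
          = fun ω => (1 - mus * η) * f (w t ω) + mus * η * f wstar := rfl
      rw [e]
      exact ((hint t).const_mul _).add (integrable_const _)
    have h2 : ∫ y, ∫ M, F (M, y) ∂(μ.map X) ∂(μ.map (w t)) ≤
        ∫ y, ((1 - mus * η) * f y + mus * η * f wstar) ∂(μ.map (w t)) :=
      integral_mono_ae hIy hRy hae
    have h3 : ∫ y, ((1 - mus * η) * f y + mus * η * f wstar) ∂(μ.map (w t))
        = (1 - mus * η) * ∫ ω, f (w t ω) ∂μ + mus * η * f wstar := by
      rw [integral_map hYm.aemeasurable hgcont.aestronglyMeasurable,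
        integral_add ((hint t).const_mul _) (integrable_const _),
        integral_const_mul, integral_const, probReal_univ]
      simp
    rw [h1]
    rw [h3] at h2
    exact h2
  -- induction
  intro t
  induction t with
  | zero =>
    have h2 : (fun ω => f (w 0 ω)) = fun _ => f w0 := funext fun ω => by rw [hw0 ω]
    rw [h2, integral_const, probReal_univ]
    simp
  | succ t ih =>
    have h1 := honestep t
    have h2 : (∫ ω, f (w (t + 1) ω) ∂μ) - f wstar ≤
        (1 - mus * η) * ((∫ ω, f (w t ω) ∂μ) - f wstar) := by
      have := hgap t
      nlinarith
    calc (∫ ω, f (w (t + 1) ω) ∂μ) - f wstar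
        ≤ (1 - mus * η) * ((∫ ω, f (w t ω) ∂μ) - f wstar) := h2
      _ ≤ (1 - mus * η) * ((1 - mus * η) ^ t * (f w0 - f wstar)) :=
          mul_le_mul_of_nonneg_left ih hfactor
      _ = (1 - mus * η) ^ (t + 1) * (f w0 - f wstar) := by ring
end

section
/- Let f_1, …, f_N : ℝ^d → ℝ each be convex and L-smooth, let f = (1/N)∑_{c=1}^N f_c have minimizer w*, and let u_1, …, u_N ∈ ℝ^d be arbitrary points. With ū = (1/N)∑_{c=1}^N u_c, ḡ = (1/N)∑_{c=1}^N ∇f_c(u_c), and V = (1/N)∑_{c=1}^N ‖u_c − ū‖², it holds that ‖ḡ‖² ≤ 2L²V + 4L(f(ū) − f(w*)). -/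
open scoped RealInnerProductSpace

/-!
Let `ū` be the mean of the `u c` and `F` the mean of the `f c`, so that `∇F` is `L`-Lipschitz.
Split `ḡ = (ḡ - ∇F ū) + ∇F ū`. Averaging the Lipschitz bounds and Cauchy–Schwarz give
`‖ḡ - ∇F ū‖² ≤ L² V`. By the descent lemma the gradient step `ū - L⁻¹ ∇F ū` lowers `F` by at least
`‖∇F ū‖² / (2L)`, and `F` cannot drop below `F w*`, so `‖∇F ū‖² ≤ 2L (F ū - F w*)`.
Finally `‖a + b‖² ≤ 2‖a‖² + 2‖b‖²`.
-/

section Gradient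

variable {E : Type*} [NormedAddCommGroup E] [InnerProductSpace ℝ E] [CompleteSpace E]

theorem HasGradientAt.const_mul {f : E → ℝ} {g x : E} (h : HasGradientAt f g x) (c : ℝ) :
    HasGradientAt (fun y => c * f y) (c • g) x := by
  rw [hasGradientAt_iff_hasFDerivAt, map_smul] at *
  exact h.const_mul c

theorem HasGradientAt.fun_sum {ι : Type*} {s : Finset ι} {f : ι → E → ℝ} {g : ι → E} {x : E}
    (h : ∀ i ∈ s, HasGradientAt (f i) (g i) x) :
    HasGradientAt (fun y => ∑ i ∈ s, f i y) (∑ i ∈ s, g i) x := by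
  rw [hasGradientAt_iff_hasFDerivAt, map_sum]
  exact HasFDerivAt.fun_sum fun i hi => hasGradientAt_iff_hasFDerivAt.mp (h i hi)

theorem le_add_inner_add_of_lipschitz_gradient {f : E → ℝ} {g : E → E} {L : ℝ}
    (hf : ∀ x, HasGradientAt f (g x) x) (hg : ∀ x y, ‖g x - g y‖ ≤ L * ‖x - y‖) (x y : E) :
    f y ≤ f x + ⟪g x, y - x⟫ + L / 2 * ‖y - x‖ ^ 2 := by
  set v := y - x
  have hslice : ∀ t : ℝ, HasDerivAt (fun s : ℝ => f (x + s • v)) ⟪g (x + t • v), v⟫ t := by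
    intro t
    have hline : HasDerivAt (fun s : ℝ => x + s • v) v t := by
      simpa using ((hasDerivAt_id t).smul_const v).const_add x
    simpa [Function.comp_def, InnerProductSpace.toDual_apply_apply] using
      (hasGradientAt_iff_hasFDerivAt.mp (hf (x + t • v))).comp_hasDerivAt t hline
  have hbound : ∀ t : ℝ, HasDerivAt (fun s : ℝ => f x + s * ⟪g x, v⟫ + L / 2 * s ^ 2 * ‖v‖ ^ 2)
      (⟪g x, v⟫ + L * t * ‖v‖ ^ 2) t := by
    intro t
    refine ((((hasDerivAt_id' t).mul_const ⟪g x, v⟫).const_add (f x)).fun_add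
      (((hasDerivAt_pow 2 t).const_mul (L / 2)).mul_const (‖v‖ ^ 2))).congr_deriv ?_
    ring
  have hslope : ∀ t ∈ Set.Ico (0 : ℝ) 1, ⟪g (x + t • v), v⟫ ≤ ⟪g x, v⟫ + L * t * ‖v‖ ^ 2 := by
    rintro t ⟨ht, -⟩
    have hlip : ‖g (x + t • v) - g x‖ ≤ L * (t * ‖v‖) := by
      simpa [norm_smul, abs_of_nonneg ht] using hg (x + t • v) x
    calc ⟪g (x + t • v), v⟫ = ⟪g x, v⟫ + ⟪g (x + t • v) - g x, v⟫ := by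
          rw [inner_sub_left]; ring
      _ ≤ ⟪g x, v⟫ + ‖g (x + t • v) - g x‖ * ‖v‖ := by gcongr; exact real_inner_le_norm _ _
      _ ≤ ⟪g x, v⟫ + L * (t * ‖v‖) * ‖v‖ := by gcongr
      _ = ⟪g x, v⟫ + L * t * ‖v‖ ^ 2 := by ring
  have := image_le_of_deriv_right_le_deriv_boundary
    (fun t _ => (hslice t).continuousAt.continuousWithinAt) (fun t _ => (hslice t).hasDerivWithinAt)
    (by simp) (fun t _ => (hbound t).continuousAt.continuousWithinAt)
    (fun t _ => (hbound t).hasDerivWithinAt) hslope (Set.right_mem_Icc.mpr zero_le_one)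
  simpa [v] using this

theorem sq_norm_le_two_mul_sub_of_lipschitz_gradient {f : E → ℝ} {g : E → E} {L : ℝ}
    (hL : 0 < L) (hf : ∀ x, HasGradientAt f (g x) x) (hg : ∀ x y, ‖g x - g y‖ ≤ L * ‖x - y‖)
    {w : E} (hw : ∀ y, f w ≤ f y) (x : E) :
    ‖g x‖ ^ 2 ≤ 2 * L * (f x - f w) := by
  have hstep := le_add_inner_add_of_lipschitz_gradient hf hg x (x - L⁻¹ • g x)
  rw [sub_sub_cancel_left, inner_neg_right, real_inner_smul_right, real_inner_self_eq_norm_sq,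
    norm_neg, norm_smul, Real.norm_of_nonneg (inv_nonneg.mpr hL.le)] at hstep
  have hdecrease : f (x - L⁻¹ • g x) ≤ f x - ‖g x‖ ^ 2 / (2 * L) := by
    convert hstep using 1
    field_simp
    ring
  have hgap : ‖g x‖ ^ 2 / (2 * L) ≤ f x - f w := by linarith [hw (x - L⁻¹ • g x)]
  rwa [div_le_iff₀ (by positivity), mul_comm] at hgap

end Gradient

section Average

variable {ι : Type*} [Fintype ι]

open Fintype in
theorem sq_inv_card_mul_sum_le (a : ι → ℝ) :
    ((card ι : ℝ)⁻¹ * ∑ i, a i) ^ 2 ≤ (card ι : ℝ)⁻¹ * ∑ i, a i ^ 2 := by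
  have hcs : (∑ i, a i) ^ 2 ≤ card ι * ∑ i, a i ^ 2 := by
    simpa using sq_sum_le_card_mul_sum_sq (s := Finset.univ) (f := a)
  calc ((card ι : ℝ)⁻¹ * ∑ i, a i) ^ 2 = (card ι : ℝ)⁻¹ ^ 2 * (∑ i, a i) ^ 2 := by ring
    _ ≤ (card ι : ℝ)⁻¹ ^ 2 * (card ι * ∑ i, a i ^ 2) := by gcongr
    _ = ((card ι : ℝ)⁻¹ * card ι) * ((card ι : ℝ)⁻¹ * ∑ i, a i ^ 2) := by ring
    _ ≤ (card ι : ℝ)⁻¹ * ∑ i, a i ^ 2 := mul_le_of_le_one_left (by positivity) inv_mul_le_one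

variable {E F : Type*} [SeminormedAddCommGroup E] [SeminormedAddCommGroup F] [NormedSpace ℝ F]

open Fintype in
theorem norm_inv_card_smul_sum_sub_le {g : ι → E → F} {L : ℝ}
    (hg : ∀ i x y, ‖g i x - g i y‖ ≤ L * ‖x - y‖) (x y : ι → E) :
    ‖(card ι : ℝ)⁻¹ • ∑ i, g i (x i) - (card ι : ℝ)⁻¹ • ∑ i, g i (y i)‖
      ≤ L * ((card ι : ℝ)⁻¹ * ∑ i, ‖x i - y i‖) := by
  rw [← smul_sub, ← Finset.sum_sub_distrib, norm_smul, Real.norm_of_nonneg (by positivity),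
    mul_left_comm, Finset.mul_sum]
  gcongr
  exact (norm_sum_le _ _).trans (Finset.sum_le_sum fun i _ => hg i (x i) (y i))

open Fintype in
theorem sq_norm_inv_card_smul_sum_sub_le {g : ι → E → F} {L : ℝ}
    (hg : ∀ i x y, ‖g i x - g i y‖ ≤ L * ‖x - y‖) (x y : ι → E) :
    ‖(card ι : ℝ)⁻¹ • ∑ i, g i (x i) - (card ι : ℝ)⁻¹ • ∑ i, g i (y i)‖ ^ 2
      ≤ L ^ 2 * ((card ι : ℝ)⁻¹ * ∑ i, ‖x i - y i‖ ^ 2) :=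
  calc _ ≤ (L * ((card ι : ℝ)⁻¹ * ∑ i, ‖x i - y i‖)) ^ 2 := by
        gcongr
        exact norm_inv_card_smul_sum_sub_le hg x y
    _ ≤ L ^ 2 * ((card ι : ℝ)⁻¹ * ∑ i, ‖x i - y i‖ ^ 2) := by
        rw [mul_pow]
        gcongr
        exact sq_inv_card_mul_sum_le _

open Fintype in
theorem norm_inv_card_smul_sum_sub_sum_le {g : ι → E → F} {L : ℝ} (hL : 0 ≤ L)
    (hg : ∀ i x y, ‖g i x - g i y‖ ≤ L * ‖x - y‖) (x y : E) :
    ‖(card ι : ℝ)⁻¹ • ∑ i, g i x - (card ι : ℝ)⁻¹ • ∑ i, g i y‖ ≤ L * ‖x - y‖ :=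
  calc _ ≤ L * ((card ι : ℝ)⁻¹ * ∑ _i : ι, ‖x - y‖) :=
        norm_inv_card_smul_sum_sub_le hg (fun _ => x) (fun _ => y)
    _ = L * (((card ι : ℝ)⁻¹ * card ι) * ‖x - y‖) := by
        rw [Finset.sum_const, Finset.card_univ, nsmul_eq_mul, mul_assoc]
    _ ≤ L * ‖x - y‖ := by
        gcongr
        exact mul_le_of_le_one_left (norm_nonneg _) inv_mul_le_one

end Average

theorem avg_gradient_norm_bound_general
    {E : Type*} [NormedAddCommGroup E] [InnerProductSpace ℝ E]
    [FiniteDimensional ℝ E]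
    {N : ℕ} (f : Fin N → E → ℝ) (L : ℝ) (hL : 0 < L)
    (hdiff : ∀ c, Differentiable ℝ (f c))
    (hsmooth : ∀ c (x y : E), ‖gradient (f c) x - gradient (f c) y‖ ≤ L * ‖x - y‖)
    (wstar : E)
    (hmin : ∀ x, (N : ℝ)⁻¹ * ∑ c, f c wstar ≤ (N : ℝ)⁻¹ * ∑ c, f c x)
    (u : Fin N → E) :
    ‖(N : ℝ)⁻¹ • ∑ c, gradient (f c) (u c)‖ ^ 2
      ≤ 2 * L ^ 2 * ((N : ℝ)⁻¹ * ∑ c, ‖u c - (N : ℝ)⁻¹ • ∑ c', u c'‖ ^ 2)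
        + 4 * L * ((N : ℝ)⁻¹ * ∑ c, f c ((N : ℝ)⁻¹ • ∑ c', u c')
            - (N : ℝ)⁻¹ * ∑ c, f c wstar) := by
  set ubar : E := (N : ℝ)⁻¹ • ∑ c', u c'
  set gbar : E := (N : ℝ)⁻¹ • ∑ c, gradient (f c) (u c)
  set F : E → ℝ := fun x => (N : ℝ)⁻¹ * ∑ c, f c x
  set G : E → E := fun x => (N : ℝ)⁻¹ • ∑ c, gradient (f c) x
  have hF : ∀ x, HasGradientAt F (G x) x := fun x =>
    (HasGradientAt.fun_sum fun c _ => (hdiff c x).hasGradientAt).const_mul _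
  have hG : ∀ x y, ‖G x - G y‖ ≤ L * ‖x - y‖ := by
    simpa only [Fintype.card_fin] using norm_inv_card_smul_sum_sub_sum_le hL.le hsmooth
  have hopt : ‖G ubar‖ ^ 2 ≤ 2 * L * (F ubar - F wstar) :=
    sq_norm_le_two_mul_sub_of_lipschitz_gradient hL hF hG hmin ubar
  have hvar : ‖gbar - G ubar‖ ^ 2 ≤ L ^ 2 * ((N : ℝ)⁻¹ * ∑ c, ‖u c - ubar‖ ^ 2) := by
    simpa only [Fintype.card_fin] using sq_norm_inv_card_smul_sum_sub_le hsmooth u fun _ => ubar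
  calc ‖gbar‖ ^ 2 ≤ (‖gbar - G ubar‖ + ‖G ubar‖) ^ 2 := by
        gcongr
        exact norm_le_norm_sub_add _ _
    _ ≤ 2 * (‖gbar - G ubar‖ ^ 2 + ‖G ubar‖ ^ 2) := add_sq_le
    _ ≤ _ := by linarith

/-- Upper bound on the squared norm of the averaged local gradient in terms of the
local-parameter variance and the global optimality gap. -/
theorem avg_gradient_norm_bound
    {E : Type*} [NormedAddCommGroup E] [InnerProductSpace ℝ E]
    [FiniteDimensional ℝ E]
    {N : ℕ} (hN : 0 < N) (f : Fin N → E → ℝ) (L : ℝ) (hL : 0 < L)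
    (hdiff : ∀ c, Differentiable ℝ (f c))
    (hsmooth : ∀ c (x y : E), ‖gradient (f c) x - gradient (f c) y‖ ≤ L * ‖x - y‖)
    (hconv : ∀ c (x y : E), f c y ≥ f c x + ⟪gradient (f c) x, y - x⟫)
    (wstar : E)
    (hmin : ∀ x, (N : ℝ)⁻¹ * ∑ c, f c wstar ≤ (N : ℝ)⁻¹ * ∑ c, f c x)
    (u : Fin N → E) :
    ‖(N : ℝ)⁻¹ • ∑ c, gradient (f c) (u c)‖ ^ 2
      ≤ 2 * L ^ 2 * ((N : ℝ)⁻¹ * ∑ c, ‖u c - (N : ℝ)⁻¹ • ∑ c', u c'‖ ^ 2)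
        + 4 * L * ((N : ℝ)⁻¹ * ∑ c, f c ((N : ℝ)⁻¹ • ∑ c', u c')
            - (N : ℝ)⁻¹ * ∑ c, f c wstar) :=
  avg_gradient_norm_bound_general f L hL hdiff hsmooth wstar hmin u
end

section
/- Let f_1, …, f_N : ℝ^d → ℝ each be μ-strongly convex (μ ≥ 0) and L-smooth, let f = (1/N)∑_{c=1}^N f_c have minimizer w*, and let u_1, …, u_N ∈ ℝ^d be arbitrary points. With ū = (1/N)∑_{c=1}^N u_c, ḡ = (1/N)∑_{c=1}^N ∇f_c(u_c), and V = (1/N)∑_{c=1}^N ‖u_c − ū‖², it holds that ⟨ū − w*, ḡ⟩ ≥ f(ū) − f(w*) − (L/2)V + (μ/2)‖ū − w*‖². -/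
open scoped RealInnerProductSpace
open Set

/-!
For each `c`, `L`-smoothness gives the descent lemma
`f_c(ū) ≤ f_c(u_c) + ⟪∇f_c(u_c), ū - u_c⟫ + (L/2)‖ū - u_c‖²`, and strong convexity gives
`f_c(w*) ≥ f_c(u_c) + ⟪∇f_c(u_c), w* - u_c⟫ + (μ/2)‖w* - u_c‖²`. Subtracting, the gradient at `u_c`
satisfies the claimed bound with `‖u_c - w*‖²` in place of `‖ū - w*‖²`; averaging over `c` and
Jensen's inequality for the convex function `‖· - w*‖²` finish the proof.

The descent lemma itself compares `t ↦ g(x + t(y - x))` on `[0, 1]` with the parabola whose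
derivative dominates it.
-/

theorem le_add_deriv_add_of_deriv_sub_le {φ φ' : ℝ → ℝ} {K : ℝ}
    (hφ : ∀ t, HasDerivAt φ (φ' t) t) (hφ' : ∀ t ∈ Ico (0 : ℝ) 1, φ' t - φ' 0 ≤ K * t) :
    φ 1 ≤ φ 0 + φ' 0 + K / 2 := by
  have hB : ∀ t, HasDerivAt (fun t ↦ φ 0 + t * φ' 0 + K / 2 * t ^ 2) (φ' 0 + K * t) t := by
    intro t
    refine ((((hasDerivAt_id t).mul_const (φ' 0)).const_add (φ 0)).add
      ((hasDerivAt_pow 2 t).const_mul (K / 2))).congr_deriv ?_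
    simp only [one_mul, Nat.cast_ofNat, Nat.add_one_sub_one, pow_one, add_right_inj]
    ring
  have := image_le_of_deriv_right_le_deriv_boundary
    (fun t _ ↦ (hφ t).continuousAt.continuousWithinAt) (fun t _ ↦ (hφ t).hasDerivWithinAt)
    (B := fun t ↦ φ 0 + t * φ' 0 + K / 2 * t ^ 2) (by simp)
    (fun t _ ↦ (hB t).continuousAt.continuousWithinAt) (fun t _ ↦ (hB t).hasDerivWithinAt)
    (fun t ht ↦ by linarith [hφ' t ht]) (right_mem_Icc.2 zero_le_one)
  simpa using this

theorem le_add_inner_gradient_add_sq_of_gradient_lipschitz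
    {E : Type*} [NormedAddCommGroup E] [InnerProductSpace ℝ E] [CompleteSpace E]
    {g : E → ℝ} {L : ℝ} (hg : Differentiable ℝ g)
    (hL : ∀ x y, ‖gradient g x - gradient g y‖ ≤ L * ‖x - y‖) (x y : E) :
    g y ≤ g x + ⟪gradient g x, y - x⟫ + L / 2 * ‖y - x‖ ^ 2 := by
  set v := y - x
  have hderiv : ∀ t : ℝ, HasDerivAt (fun t ↦ g (x + t • v)) ⟪gradient g (x + t • v), v⟫ t := by
    intro t
    have hline : HasDerivAt (fun t : ℝ ↦ x + t • v) v t := by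
      simpa using ((hasDerivAt_id t).smul_const v).const_add x
    simpa [Function.comp_def] using
      (hg (x + t • v)).hasGradientAt.hasFDerivAt.comp_hasDerivAt t hline
  have hgrowth : ∀ t ∈ Ico (0 : ℝ) 1,
      ⟪gradient g (x + t • v), v⟫ - ⟪gradient g (x + (0 : ℝ) • v), v⟫ ≤ L * ‖v‖ ^ 2 * t := by
    intro t ht
    calc ⟪gradient g (x + t • v), v⟫ - ⟪gradient g (x + (0 : ℝ) • v), v⟫
        = ⟪gradient g (x + t • v) - gradient g x, v⟫ := by simp [inner_sub_left]
      _ ≤ ‖gradient g (x + t • v) - gradient g x‖ * ‖v‖ := real_inner_le_norm _ _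
      _ ≤ L * ‖t • v‖ * ‖v‖ := by
          gcongr
          simpa using hL (x + t • v) x
      _ = L * ‖v‖ ^ 2 * t := by rw [norm_smul, Real.norm_of_nonneg ht.1]; ring
  simpa [v, mul_div_right_comm] using le_add_deriv_add_of_deriv_sub_le hderiv hgrowth

theorem norm_average_sub_sq_le {ι E : Type*} [Fintype ι] [Nonempty ι]
    [NormedAddCommGroup E] [InnerProductSpace ℝ E] (v : ι → E) (w : E) :
    ‖(Fintype.card ι : ℝ)⁻¹ • ∑ i, v i - w‖ ^ 2
      ≤ (Fintype.card ι : ℝ)⁻¹ * ∑ i, ‖v i - w‖ ^ 2 := by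
  have hconv : ConvexOn ℝ univ fun x : E ↦ ‖x - w‖ ^ 2 := by
    simpa [dist_eq_norm, Pi.pow_def] using (convexOn_univ_dist w).pow (fun _ _ ↦ dist_nonneg) 2
  have := hconv.map_sum_le (t := Finset.univ) (w := fun _ ↦ (Fintype.card ι : ℝ)⁻¹) (p := v)
    (fun _ _ ↦ by positivity) (by simp) (fun _ _ ↦ mem_univ _)
  simpa only [← Finset.smul_sum, ← Finset.mul_sum, smul_eq_mul] using this

theorem inner_sub_gradient_ge_of_smooth_of_strongConvex
    {E : Type*} [NormedAddCommGroup E] [InnerProductSpace ℝ E] [CompleteSpace E]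
    {g : E → ℝ} {L μ : ℝ} (hg : Differentiable ℝ g)
    (hL : ∀ x y, ‖gradient g x - gradient g y‖ ≤ L * ‖x - y‖)
    (hμ : ∀ x y, g y ≥ g x + ⟪gradient g x, y - x⟫ + μ / 2 * ‖y - x‖ ^ 2) (u z w : E) :
    g z - g w - L / 2 * ‖u - z‖ ^ 2 + μ / 2 * ‖u - w‖ ^ 2 ≤ ⟪z - w, gradient g u⟫ := by
  have hupper := le_add_inner_gradient_add_sq_of_gradient_lipschitz hg hL u z
  have hlower := hμ u w
  have hsplit : ⟪z - w, gradient g u⟫ = ⟪gradient g u, z - u⟫ - ⟪gradient g u, w - u⟫ := by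
    rw [real_inner_comm, ← inner_sub_right, sub_sub_sub_cancel_right]
  rw [hsplit, norm_sub_rev u z, norm_sub_rev u w]
  linarith

theorem avg_gradient_inner_bound_general
    {E : Type*} [NormedAddCommGroup E] [InnerProductSpace ℝ E]
    [FiniteDimensional ℝ E]
    {N : ℕ} (hN : 0 < N) (f : Fin N → E → ℝ) (L mus : ℝ)
    (hmus : 0 ≤ mus)
    (hdiff : ∀ c, Differentiable ℝ (f c))
    (hsmooth : ∀ c (x y : E), ‖gradient (f c) x - gradient (f c) y‖ ≤ L * ‖x - y‖)
    (hsc : ∀ c (x y : E),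
      f c y ≥ f c x + ⟪gradient (f c) x, y - x⟫ + mus / 2 * ‖y - x‖ ^ 2)
    (wstar : E)
    (u : Fin N → E) :
    ⟪(N : ℝ)⁻¹ • ∑ c, u c - wstar, (N : ℝ)⁻¹ • ∑ c, gradient (f c) (u c)⟫
      ≥ (N : ℝ)⁻¹ * ∑ c, f c ((N : ℝ)⁻¹ • ∑ c', u c')
          - (N : ℝ)⁻¹ * ∑ c, f c wstar
        - L / 2 * ((N : ℝ)⁻¹ * ∑ c, ‖u c - (N : ℝ)⁻¹ • ∑ c', u c'‖ ^ 2)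
        + mus / 2 * ‖(N : ℝ)⁻¹ • ∑ c, u c - wstar‖ ^ 2 := by
  have : Nonempty (Fin N) := ⟨⟨0, hN⟩⟩
  set ubar := (N : ℝ)⁻¹ • ∑ c, u c
  have hjensen : ‖ubar - wstar‖ ^ 2 ≤ (N : ℝ)⁻¹ * ∑ c, ‖u c - wstar‖ ^ 2 := by
    simpa using norm_average_sub_sq_le u wstar
  have hclients := Finset.sum_le_sum fun c (_ : c ∈ Finset.univ) ↦
    inner_sub_gradient_ge_of_smooth_of_strongConvex (hdiff c) (hsmooth c) (hsc c) (u c) ubar wstar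
  simp only [Finset.sum_add_distrib, Finset.sum_sub_distrib, ← Finset.mul_sum] at hclients
  rw [real_inner_smul_right, inner_sum]
  linarith [mul_le_mul_of_nonneg_left hclients (by positivity : 0 ≤ (N : ℝ)⁻¹),
    mul_le_mul_of_nonneg_left hjensen (by positivity : 0 ≤ mus / 2)]

/-- Lower bound on the inner product between the averaged local gradient and the
direction to the optimum. -/
theorem avg_gradient_inner_bound
    {E : Type*} [NormedAddCommGroup E] [InnerProductSpace ℝ E]
    [FiniteDimensional ℝ E]
    {N : ℕ} (hN : 0 < N) (f : Fin N → E → ℝ) (L mus : ℝ) (hL : 0 < L)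
    (hmus : 0 ≤ mus)
    (hdiff : ∀ c, Differentiable ℝ (f c))
    (hsmooth : ∀ c (x y : E), ‖gradient (f c) x - gradient (f c) y‖ ≤ L * ‖x - y‖)
    (hsc : ∀ c (x y : E),
      f c y ≥ f c x + ⟪gradient (f c) x, y - x⟫ + mus / 2 * ‖y - x‖ ^ 2)
    (wstar : E)
    (hmin : ∀ x, (N : ℝ)⁻¹ * ∑ c, f c wstar ≤ (N : ℝ)⁻¹ * ∑ c, f c x)
    (u : Fin N → E) :
    ⟪(N : ℝ)⁻¹ • ∑ c, u c - wstar, (N : ℝ)⁻¹ • ∑ c, gradient (f c) (u c)⟫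
      ≥ (N : ℝ)⁻¹ * ∑ c, f c ((N : ℝ)⁻¹ • ∑ c', u c')
          - (N : ℝ)⁻¹ * ∑ c, f c wstar
        - L / 2 * ((N : ℝ)⁻¹ * ∑ c, ‖u c - (N : ℝ)⁻¹ • ∑ c', u c'‖ ^ 2)
        + mus / 2 * ‖(N : ℝ)⁻¹ • ∑ c, u c - wstar‖ ^ 2 :=
  avg_gradient_inner_bound_general hN f L mus hmus hdiff hsmooth hsc wstar u
end

section
/- Let f_1, …, f_N : ℝ^d → ℝ each be convex and L-smooth, let f = (1/N)∑_{c=1}^N f_c have minimizer w* (so ∇f(w*) = 0), and let σ² = (1/N)∑_{c=1}^N ‖∇f_c(w*)‖². Suppose all clients start from a common point, u_c^{0} = ū^{0} for every c, and run local gradient descent u_c^{k} = u_c^{k−1} − η ∇f_c(u_c^{k−1}) for k = 1, …, K−1 with step size 0 < η ≤ 1/(8LK). Let ū^{k} = (1/N)∑_{c=1}^N u_c^{k} and V^{k} = (1/N)∑_{c=1}^N ‖u_c^{k} − ū^{k}‖². Then ∑_{k=0}^{K−1} V^{k} ≤ 8η²LK² ∑_{k=0}^{K−1} (f(ū^{k})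 − f(w*)) + 4η²K³σ². -/
open scoped RealInnerProductSpace

section helpers
set_option linter.unusedSectionVars false
variable {E : Type*} [NormedAddCommGroup E] [InnerProductSpace ℝ E] [CompleteSpace E]


lemma fderiv_apply_eq_inner_gradient (f : E → ℝ) (x v : E) :
    fderiv ℝ f x v = ⟪gradient f x, v⟫ := by
  rw [gradient, ← InnerProductSpace.toDual_apply_apply, (InnerProductSpace.toDual ℝ E).apply_symm_apply]

lemma line_hasDerivAt (f : E → ℝ) (hf : Differentiable ℝ f) (x v : E) (t : ℝ) :
    HasDerivAt (fun s : ℝ => f (x + s • v)) ⟪gradient f (x + t • v), v⟫ t := by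
  have h1 : HasDerivAt (fun s : ℝ => x + s • v) v t := by
    simpa using ((hasDerivAt_id t).smul_const v).const_add x
  have h2 := (hf (x + t • v)).hasFDerivAt.comp_hasDerivAt t h1
  rw [fderiv_apply_eq_inner_gradient] at h2
  exact h2

lemma descent_lemma (f : E → ℝ) {L : ℝ} (hL : 0 < L) (hf : Differentiable ℝ f)
    (hlip : ∀ x y, ‖gradient f x - gradient f y‖ ≤ L * ‖x - y‖) (x y : E) :
    f y ≤ f x + ⟪gradient f x, y - x⟫ + L / 2 * ‖y - x‖ ^ 2 := by
  set v := y - x with hv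
  set ψ : ℝ → ℝ := fun t => f x + t * ⟪gradient f x, v⟫ + L / 2 * t ^ 2 * ‖v‖ ^ 2
      - f (x + t • v) with hψ
  have hder : ∀ t : ℝ, HasDerivAt ψ
      (⟪gradient f x, v⟫ + L * t * ‖v‖ ^ 2 - ⟪gradient f (x + t • v), v⟫) t := by
    intro t
    have h1 : HasDerivAt (fun t : ℝ => f x + t * ⟪gradient f x, v⟫ + L / 2 * t ^ 2 * ‖v‖ ^ 2)
        (⟪gradient f x, v⟫ + L * t * ‖v‖ ^ 2) t := by
      have : HasDerivAt (fun t : ℝ => f x + t * ⟪gradient f x, v⟫ + L / 2 * t ^ 2 * ‖v‖ ^ 2)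
          (0 + 1 * ⟪gradient f x, v⟫ + L / 2 * ((2:ℕ) * t ^ (2-1)) * ‖v‖ ^ 2) t := by
        exact (((hasDerivAt_const t (f x)).add
          ((hasDerivAt_id t).mul_const _)).add
          (((hasDerivAt_pow 2 t).const_mul (L / 2)).mul_const (‖v‖ ^ 2)))
      convert this using 1; push_cast; ring
    exact h1.sub (line_hasDerivAt f hf x v t)
  have hmono : MonotoneOn ψ (Set.Icc 0 1) := by
    apply monotoneOn_of_deriv_nonneg (convex_Icc 0 1)
    · exact Continuous.continuousOn (by
        have : Differentiable ℝ ψ := fun t => (hder t).differentiableAt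
        exact this.continuous)
    · intro t ht
      exact ((hder t).differentiableAt).differentiableWithinAt
    · intro t ht
      rw [interior_Icc] at ht
      rw [(hder t).deriv]
      have hls : ⟪gradient f (x + t • v) - gradient f x, v⟫ ≤ L * t * ‖v‖ ^ 2 := by
        calc ⟪gradient f (x + t • v) - gradient f x, v⟫
            ≤ ‖gradient f (x + t • v) - gradient f x‖ * ‖v‖ := real_inner_le_norm _ _
          _ ≤ L * ‖(x + t • v) - x‖ * ‖v‖ := by
              have := hlip (x + t • v) x
              nlinarith [norm_nonneg v]
          _ = L * (|t| * ‖v‖) * ‖v‖ := by rw [add_sub_cancel_left, norm_smul]; simp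
          _ = L * t * ‖v‖ ^ 2 := by rw [abs_of_pos ht.1]; ring
      have expand : ⟪gradient f (x + t • v) - gradient f x, v⟫
          = ⟪gradient f (x + t • v), v⟫ - ⟪gradient f x, v⟫ := by
        rw [inner_sub_left]
      linarith
  have h01 := hmono (Set.left_mem_Icc.2 zero_le_one) (Set.right_mem_Icc.2 zero_le_one) zero_le_one
  have : ψ 0 = 0 := by simp [hψ]
  have hy : x + (1 : ℝ) • v = y := by simp [hv]
  rw [this] at h01
  simp only [hψ, hy, one_mul, one_pow] at h01
  linarith


lemma cocoercivity (f : E → ℝ) {L : ℝ} (hL : 0 < L) (hf : Differentiable ℝ f)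
    (hlip : ∀ x y, ‖gradient f x - gradient f y‖ ≤ L * ‖x - y‖)
    (hconv : ∀ x y, f y ≥ f x + ⟪gradient f x, y - x⟫) (x y : E) :
    ‖gradient f x - gradient f y‖ ^ 2 ≤ 2 * L * (f x - f y - ⟪gradient f y, x - y⟫) := by
  set g := gradient f x - gradient f y with hg
  set x' := x - (L⁻¹) • g with hx'
  have hd := descent_lemma f hL hf hlip x x'
  have hc := hconv y x'
  have e1 : x' - x = -(L⁻¹ • g) := by rw [hx']; abel
  have e2 : x' - y = (x - y) - L⁻¹ • g := by rw [hx']; abel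
  have i1 : ⟪gradient f x, x' - x⟫ = -(L⁻¹ * ⟪gradient f x, g⟫) := by
    rw [e1, inner_neg_right, real_inner_smul_right]
  have i2 : ‖x' - x‖ ^ 2 = L⁻¹ ^ 2 * ‖g‖ ^ 2 := by
    rw [e1, norm_neg, norm_smul]
    simp [abs_of_pos (inv_pos.2 hL), mul_pow]
  have i3 : ⟪gradient f y, x' - y⟫ = ⟪gradient f y, x - y⟫ - L⁻¹ * ⟪gradient f y, g⟫ := by
    rw [e2, inner_sub_right, real_inner_smul_right]
  have i4 : ⟪gradient f x, g⟫ - ⟪gradient f y, g⟫ = ‖g‖ ^ 2 := by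
    rw [← inner_sub_left, ← hg, real_inner_self_eq_norm_sq]
  rw [i1, i2] at hd
  rw [i3] at hc
  have hL' : L⁻¹ > 0 := inv_pos.2 hL
  have key : L⁻¹ * ‖g‖ ^ 2 - L / 2 * (L⁻¹ ^ 2 * ‖g‖ ^ 2) ≤ f x - f y - ⟪gradient f y, x - y⟫ := by
    nlinarith [i4]
  have : L⁻¹ * ‖g‖ ^ 2 - L / 2 * (L⁻¹ ^ 2 * ‖g‖ ^ 2) = ‖g‖ ^ 2 / (2 * L) := by
    field_simp; ring
  rw [this] at key
  rw [div_le_iff₀ (by positivity)] at key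
  linarith

lemma mean_min_var {N : ℕ} (hN : 0 < N) (a : Fin N → E) (z : E) :
    ∑ c, ‖a c - (N : ℝ)⁻¹ • ∑ c', a c'‖ ^ 2 ≤ ∑ c, ‖a c - z‖ ^ 2 := by
  set m := (N : ℝ)⁻¹ • ∑ c', a c' with hm
  have hsum0 : ∑ c, (a c - m) = 0 := by
    rw [Finset.sum_sub_distrib]
    simp only [Finset.sum_const, Finset.card_univ, Fintype.card_fin, hm]
    rw [← Nat.cast_smul_eq_nsmul ℝ, smul_smul,
      mul_inv_cancel₀ (by exact_mod_cast hN.ne' : (N : ℝ) ≠ 0), one_smul, sub_self]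
  have expand : ∀ c, ‖a c - z‖ ^ 2
      = ‖a c - m‖ ^ 2 + 2 * ⟪a c - m, m - z⟫ + ‖m - z‖ ^ 2 := by
    intro c
    have : a c - z = (a c - m) + (m - z) := by abel
    rw [this, norm_add_sq_real]
  calc ∑ c, ‖a c - m‖ ^ 2
      ≤ ∑ c, ‖a c - m‖ ^ 2 + (2 * ⟪∑ c, (a c - m), m - z⟫ + N * ‖m - z‖ ^ 2) := by
        rw [hsum0]; simp; positivity
    _ = ∑ c, ‖a c - z‖ ^ 2 := by
        rw [Finset.sum_congr rfl (fun c _ => expand c), Finset.sum_add_distrib,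
          Finset.sum_add_distrib, sum_inner]
        simp [Finset.mul_sum, Finset.sum_const, Finset.card_univ]
        ring


lemma norm_sum_sq_le (k : ℕ) (a : ℕ → E) :
    ‖∑ j ∈ Finset.range k, a j‖ ^ 2 ≤ k * ∑ j ∈ Finset.range k, ‖a j‖ ^ 2 := by
  calc ‖∑ j ∈ Finset.range k, a j‖ ^ 2 ≤ (∑ j ∈ Finset.range k, ‖a j‖) ^ 2 := by
        have := norm_sum_le (Finset.range k) a
        nlinarith [norm_nonneg (∑ j ∈ Finset.range k, a j),
          Finset.sum_nonneg (fun j (_ : j ∈ Finset.range k) => norm_nonneg (a j))]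
    _ ≤ (Finset.range k).card * ∑ j ∈ Finset.range k, ‖a j‖ ^ 2 :=
        sq_sum_le_card_mul_sum_sq
    _ = k * ∑ j ∈ Finset.range k, ‖a j‖ ^ 2 := by simp


lemma grad_sum_zero {N : ℕ} (hN : 0 < N) (f : Fin N → E → ℝ)
    (hdiff : ∀ c, Differentiable ℝ (f c)) (wstar : E)
    (hmin : ∀ x, (N : ℝ)⁻¹ * ∑ c, f c wstar ≤ (N : ℝ)⁻¹ * ∑ c, f c x) (v : E) :
    ∑ c, ⟪gradient (f c) wstar, v⟫ = 0 := by
  have hNpos : (0:ℝ) < N := by exact_mod_cast hN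
  have hmin' : IsLocalMin (fun x => ∑ c, f c x) wstar := by
    apply IsMinOn.isLocalMin _ (Filter.univ_mem)
    intro x _
    have := hmin x
    simpa using (mul_le_mul_iff_right₀ (inv_pos.2 hNpos)).1 this
  have hfd : ∀ c, DifferentiableAt ℝ (f c) wstar := fun c => (hdiff c) wstar
  have hzero : fderiv ℝ (fun x => ∑ c, f c x) wstar = 0 := hmin'.fderiv_eq_zero
  have hsum : fderiv ℝ (fun x => ∑ c, f c x) wstar
      = ∑ c, fderiv ℝ (f c) wstar := by
    rw [fderiv_fun_sum (fun c _ => hfd c)]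
  have : (∑ c, fderiv ℝ (f c) wstar) v = 0 := by rw [← hsum, hzero]; rfl
  rw [ContinuousLinearMap.sum_apply] at this
  rw [← this]
  congr 1; ext c
  rw [gradient, ← InnerProductSpace.toDual_apply_apply, (InnerProductSpace.toDual ℝ E).apply_symm_apply]

end helpers

lemma aux_gauss (K : ℕ) : (∑ k ∈ Finset.range K, (k : ℝ)) ≤ (K : ℝ) ^ 2 / 2 := by
  induction K with
  | zero => simp
  | succ n ih =>
    rw [Finset.sum_range_succ]
    push_cast
    nlinarith [ih, Nat.cast_nonneg (α := ℝ) n]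

lemma aux_q {η L K1 : ℝ} (hη0 : 0 < η) (hL : 0 < L) (hK : 1 ≤ K1)
    (h : η ≤ 1 / (8 * L * K1)) : η ^ 2 * L ^ 2 * K1 ^ 2 ≤ 1 / 64 := by
  have h8 : (0:ℝ) < 8 * L * K1 := by positivity
  have h1 := (le_div_iff₀ h8).1 h
  have ht : η * L * K1 ≤ 1 / 8 := by nlinarith
  have htnn : 0 ≤ η * L * K1 := by positivity
  nlinarith [ht, htnn]

lemma aux_final {SV SD s2 η L K1 : ℝ} (hSVnn : 0 ≤ SV) (hSDnn : 0 ≤ SD) (hs2nn : 0 ≤ s2)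
    (hq : η ^ 2 * L ^ 2 * K1 ^ 2 ≤ 1 / 64) (hη2 : 0 ≤ η ^ 2) (hL : 0 ≤ L) (hK : 0 ≤ K1)
    (hmain : SV ≤ η ^ 2 * L ^ 2 * K1 ^ 2 * SV + 4 * η ^ 2 * L * K1 ^ 2 * SD
      + 2 * η ^ 2 * K1 ^ 3 * s2) :
    SV ≤ 8 * η ^ 2 * L * K1 ^ 2 * SD + 4 * η ^ 2 * K1 ^ 3 * s2 := by
  nlinarith [mul_le_mul_of_nonneg_right hq hSVnn,
    mul_nonneg (mul_nonneg (mul_nonneg hη2 hL) (mul_nonneg hK hK)) hSDnn,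
    mul_nonneg (mul_nonneg hη2 (mul_nonneg (mul_nonneg hK hK) hK)) hs2nn]

set_option maxHeartbeats 1000000 in
/-- Variance bound over `K` local gradient-descent steps started from a common point. -/
theorem local_steps_variance_bound
    {E : Type*} [NormedAddCommGroup E] [InnerProductSpace ℝ E]
    [FiniteDimensional ℝ E]
    {N : ℕ} (hN : 0 < N) (f : Fin N → E → ℝ) (L η : ℝ) (K : ℕ) (hK : 0 < K)
    (hL : 0 < L)
    (hdiff : ∀ c, Differentiable ℝ (f c))
    (hsmooth : ∀ c (x y : E), ‖gradient (f c) x - gradient (f c) y‖ ≤ L * ‖x - y‖)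
    (hconv : ∀ c (x y : E), f c y ≥ f c x + ⟪gradient (f c) x, y - x⟫)
    (wstar : E)
    (hmin : ∀ x, (N : ℝ)⁻¹ * ∑ c, f c wstar ≤ (N : ℝ)⁻¹ * ∑ c, f c x)
    (u : Fin N → ℕ → E) (u0 : E)
    (hu0 : ∀ c, u c 0 = u0)
    (hrec : ∀ c k, k + 1 < K → u c (k + 1) = u c k - η • gradient (f c) (u c k))
    (hη0 : 0 < η) (hη : η ≤ 1 / (8 * L * K)) :
    (∑ k ∈ Finset.range K, (N : ℝ)⁻¹ * ∑ c, ‖u c k - (N : ℝ)⁻¹ • ∑ c', u c' k‖ ^ 2)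
      ≤ 8 * η ^ 2 * L * (K : ℝ) ^ 2 *
          (∑ k ∈ Finset.range K,
            ((N : ℝ)⁻¹ * ∑ c, f c ((N : ℝ)⁻¹ • ∑ c', u c' k)
              - (N : ℝ)⁻¹ * ∑ c, f c wstar))
        + 4 * η ^ 2 * (K : ℝ) ^ 3 *
            ((N : ℝ)⁻¹ * ∑ c, ‖gradient (f c) wstar‖ ^ 2) := by
  have hNR : (0:ℝ) < N := by exact_mod_cast hN
  have hNinv : (0:ℝ) ≤ (N:ℝ)⁻¹ := by positivity
  have hKR : (1:ℝ) ≤ K := by exact_mod_cast hK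
  -- abbreviations
  set m : ℕ → E := fun k => (N : ℝ)⁻¹ • ∑ c', u c' k with hm
  set V : ℕ → ℝ := fun k => (N : ℝ)⁻¹ * ∑ c, ‖u c k - m k‖ ^ 2 with hV
  set A : ℕ → ℝ := fun k => (N : ℝ)⁻¹ * ∑ c, ‖gradient (f c) (u c k)‖ ^ 2 with hA
  set D : ℕ → ℝ := fun k => (N : ℝ)⁻¹ * ∑ c, f c (m k) - (N : ℝ)⁻¹ * ∑ c, f c wstar with hD
  set s2 : ℝ := (N : ℝ)⁻¹ * ∑ c, ‖gradient (f c) wstar‖ ^ 2 with hs2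
  -- telescoping
  have htel : ∀ c k, k < K →
      u c k = u0 - η • ∑ j ∈ Finset.range k, gradient (f c) (u c j) := by
    intro c k
    induction k with
    | zero => intro _; simp [hu0 c]
    | succ k ih =>
      intro hk1
      have hk : k < K := Nat.lt_of_succ_lt hk1
      rw [hrec c k hk1, Finset.sum_range_succ, smul_add, ih hk]
      abel
  -- step 1
  have step1 : ∀ k, k < K → V k ≤ η ^ 2 * k * ∑ j ∈ Finset.range k, A j := by
    intro k hk
    have h1 : ∑ c, ‖u c k - m k‖ ^ 2 ≤ ∑ c, ‖u c k - u0‖ ^ 2 :=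
      mean_min_var hN (fun c => u c k) u0
    have h2 : ∀ c : Fin N, ‖u c k - u0‖ ^ 2
        ≤ η ^ 2 * (k * ∑ j ∈ Finset.range k, ‖gradient (f c) (u c j)‖ ^ 2) := by
      intro c
      have he : u c k - u0 = -(η • ∑ j ∈ Finset.range k, gradient (f c) (u c j)) := by
        rw [htel c k hk]; abel
      rw [he, norm_neg, norm_smul, mul_pow]
      have hcs := norm_sum_sq_le k (fun j => gradient (f c) (u c j))
      have : ‖η‖ ^ 2 = η ^ 2 := by rw [Real.norm_eq_abs, sq_abs]
      rw [this]
      exact mul_le_mul_of_nonneg_left hcs (by positivity)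
    calc V k ≤ (N : ℝ)⁻¹ * ∑ c, ‖u c k - u0‖ ^ 2 :=
          mul_le_mul_of_nonneg_left h1 hNinv
      _ ≤ (N : ℝ)⁻¹ * ∑ c : Fin N,
            η ^ 2 * (k * ∑ j ∈ Finset.range k, ‖gradient (f c) (u c j)‖ ^ 2) :=
          mul_le_mul_of_nonneg_left (Finset.sum_le_sum (fun c _ => h2 c)) hNinv
      _ = η ^ 2 * k * ∑ j ∈ Finset.range k, A j := by
          simp only [hA, Finset.mul_sum]
          rw [Finset.sum_comm]
          refine Finset.sum_congr rfl fun j _ => ?_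
          refine Finset.sum_congr rfl fun c _ => ?_
          ring
  -- step 2
  have step2 : ∀ k, A k ≤ 2 * L ^ 2 * V k + 8 * L * D k + 4 * s2 := by
    intro k
    have hper : ∀ c : Fin N, ‖gradient (f c) (u c k)‖ ^ 2
        ≤ 2 * L ^ 2 * ‖u c k - m k‖ ^ 2
          + 8 * L * (f c (m k) - f c wstar - ⟪gradient (f c) wstar, m k - wstar⟫)
          + 4 * ‖gradient (f c) wstar‖ ^ 2 := by
      intro c
      set g1 := gradient (f c) (u c k)
      set g2 := gradient (f c) (m k)
      set g3 := gradient (f c) wstar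
      have t1 : ‖g1‖ ≤ ‖g1 - g2‖ + ‖g2‖ := by
        simpa using norm_add_le (g1 - g2) g2
      have t2 : ‖g1 - g2‖ ≤ L * ‖u c k - m k‖ := hsmooth c (u c k) (m k)
      have t3 : ‖g2‖ ≤ ‖g2 - g3‖ + ‖g3‖ := by
        simpa using norm_add_le (g2 - g3) g3
      have t4 : ‖g2 - g3‖ ^ 2 ≤ 2 * L * (f c (m k) - f c wstar - ⟪g3, m k - wstar⟫) :=
        cocoercivity (f c) hL (hdiff c) (hsmooth c) (hconv c) (m k) wstar
      nlinarith [norm_nonneg g1, norm_nonneg g2, norm_nonneg g3, norm_nonneg (g1 - g2),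
        norm_nonneg (g2 - g3), norm_nonneg (u c k - m k), sq_nonneg (‖g1 - g2‖ - ‖g2‖),
        sq_nonneg (‖g2 - g3‖ - ‖g3‖), hL.le]
    have hz : ∑ c, ⟪gradient (f c) wstar, m k - wstar⟫ = 0 :=
      grad_sum_zero hN f hdiff wstar hmin (m k - wstar)
    have hsumle := Finset.sum_le_sum (fun c (_ : c ∈ Finset.univ) => hper c)
    have := mul_le_mul_of_nonneg_left hsumle hNinv
    calc A k ≤ (N : ℝ)⁻¹ * ∑ c : Fin N,
          (2 * L ^ 2 * ‖u c k - m k‖ ^ 2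
            + 8 * L * (f c (m k) - f c wstar - ⟪gradient (f c) wstar, m k - wstar⟫)
            + 4 * ‖gradient (f c) wstar‖ ^ 2) := this
      _ = 2 * L ^ 2 * V k + 8 * L * D k + 4 * s2 := by
          simp only [Finset.sum_add_distrib, Finset.sum_sub_distrib, hz,
            ← Finset.mul_sum, hV, hD, hs2]
          ring
  -- nonnegativity
  have hVnn : ∀ k, 0 ≤ V k := by
    intro k; apply mul_nonneg hNinv; positivity
  have hAnn : ∀ k, 0 ≤ A k := by
    intro k; apply mul_nonneg hNinv; positivity
  have hDnn : ∀ k, 0 ≤ D k := fun k => sub_nonneg.2 (hmin (m k))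
  have hs2nn : 0 ≤ s2 := mul_nonneg hNinv (by positivity)
  -- sums
  set SV := ∑ k ∈ Finset.range K, V k with hSV
  set SA := ∑ k ∈ Finset.range K, A k with hSA
  set SD := ∑ k ∈ Finset.range K, D k with hSD
  have hSVnn : 0 ≤ SV := Finset.sum_nonneg (fun k _ => hVnn k)
  have hSAnn : 0 ≤ SA := Finset.sum_nonneg (fun k _ => hAnn k)
  have hSDnn : 0 ≤ SD := Finset.sum_nonneg (fun k _ => hDnn k)
  -- SV ≤ η² K²/2 SA
  have hpart : ∀ k, k < K → ∑ j ∈ Finset.range k, A j ≤ SA := by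
    intro k hk
    exact Finset.sum_le_sum_of_subset_of_nonneg
      (Finset.range_subset_range.2 hk.le) (fun j _ _ => hAnn j)
  have hsumk : (∑ k ∈ Finset.range K, (k : ℝ)) ≤ (K : ℝ) ^ 2 / 2 := aux_gauss K
  have hSV1 : SV ≤ η ^ 2 * ((K : ℝ) ^ 2 / 2) * SA := by
    calc SV ≤ ∑ k ∈ Finset.range K, η ^ 2 * k * SA := by
          apply Finset.sum_le_sum
          intro k hk
          have hk' := Finset.mem_range.1 hk
          refine (step1 k hk').trans ?_
          apply mul_le_mul_of_nonneg_left (hpart k hk') (by positivity)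
      _ = η ^ 2 * (∑ k ∈ Finset.range K, (k : ℝ)) * SA := by
          simp only [Finset.mul_sum, Finset.sum_mul]
          try exact Finset.sum_congr rfl fun k _ => by ring
      _ ≤ η ^ 2 * ((K : ℝ) ^ 2 / 2) * SA := by
          apply mul_le_mul_of_nonneg_right _ hSAnn
          apply mul_le_mul_of_nonneg_left hsumk (by positivity)
  have hSA2 : SA ≤ 2 * L ^ 2 * SV + 8 * L * SD + 4 * K * s2 := by
    calc SA ≤ ∑ k ∈ Finset.range K, (2 * L ^ 2 * V k + 8 * L * D k + 4 * s2) :=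
          Finset.sum_le_sum (fun k _ => step2 k)
      _ = 2 * L ^ 2 * SV + 8 * L * SD + 4 * K * s2 := by
          simp only [Finset.sum_add_distrib, ← Finset.mul_sum, Finset.sum_const,
            Finset.card_range, nsmul_eq_mul]
          ring
  -- η L K ≤ 1/8
  have hq : η ^ 2 * L ^ 2 * (K : ℝ) ^ 2 ≤ 1 / 64 := aux_q hη0 hL hKR hη
  -- combine
  have hmain : SV ≤ η ^ 2 * L ^ 2 * (K : ℝ) ^ 2 * SV
      + 4 * η ^ 2 * L * (K : ℝ) ^ 2 * SD + 2 * η ^ 2 * (K : ℝ) ^ 3 * s2 := by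
    have h := hSV1.trans (mul_le_mul_of_nonneg_left hSA2 (by positivity : (0:ℝ) ≤ η ^ 2 * ((K : ℝ) ^ 2 / 2)))
    exact h.trans (le_of_eq (by ring))
  have hfin : SV ≤ 8 * η ^ 2 * L * (K : ℝ) ^ 2 * SD + 4 * η ^ 2 * (K : ℝ) ^ 3 * s2 :=
    aux_final hSVnn hSDnn hs2nn hq (sq_nonneg η) hL.le (by positivity) hmain
  simpa only [hSV, hV, hSD, hD, hs2, hm] using hfin
end

section
/- Suppose G is β-Lipschitz, i.e. ‖G(x) − G(y)‖ ≤ β‖x − y‖ for all x, y ∈ ℝ^m, and the Jacobian has operator norm bounded as ‖J(x)‖ ≤ θ₂ for all x. Then the attack loss L(x) = ‖G(x) − g‖² is (2(β + θ₂), β², 1/2)-semi-smooth: for all x, y ∈ ℝ^m, L(y) ≤ L(x) + ⟨∇L(x), y − x⟩ + β²‖y − x‖² + 2(β + θ₂)‖y − x‖·L(x)^{1/2}. -/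
open scoped RealInnerProductSpace

/-!
Write `G y - g = (G x - g) + (G y - G x)` and expand the square. The cross term
`⟪G x - g, G y - G x⟫` differs from the gradient term `⟪G x - g, J x (y - x)⟫` by at most
`‖G x - g‖ * ‖G y - G x - J x (y - x)‖ ≤ (β + θ₂) ‖y - x‖ √L(x)`, and the Lipschitz bound gives
`‖G y - G x‖² ≤ β² ‖y - x‖²`.
-/

theorem inner_gradient_norm_sub_sq {E F : Type*} [NormedAddCommGroup E] [InnerProductSpace ℝ E]
    [CompleteSpace E] [NormedAddCommGroup F] [InnerProductSpace ℝ F] {f : E → F} {x : E}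
    (hf : DifferentiableAt ℝ f x) (c : F) (v : E) :
    ⟪gradient (fun z => ‖f z - c‖ ^ 2) x, v⟫ = 2 * ⟪f x - c, fderiv ℝ f x v⟫ := by
  rw [gradient, InnerProductSpace.toDual_symm_apply,
    (hf.hasFDerivAt.sub_const c).norm_sq.fderiv]
  simp [inner_sub_left]

theorem norm_add_sq_le_of_norm_le {F : Type*} [NormedAddCommGroup F] [InnerProductSpace ℝ F]
    {u w d : F} {β θ r : ℝ} (hw : ‖w‖ ≤ β * r) (hd : ‖d‖ ≤ θ * r) :
    ‖u + w‖ ^ 2 ≤ ‖u‖ ^ 2 + 2 * ⟪u, d⟫ + β ^ 2 * r ^ 2 + 2 * (β + θ) * r * ‖u‖ := by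
  have hcross : ⟪u, w⟫ ≤ ⟪u, d⟫ + (β + θ) * r * ‖u‖ :=
    calc ⟪u, w⟫ = ⟪u, d⟫ + ⟪u, w - d⟫ := by rw [inner_sub_right]; ring
      _ ≤ ⟪u, d⟫ + ‖u‖ * ‖w - d‖ := by gcongr; exact real_inner_le_norm u _
      _ ≤ ⟪u, d⟫ + ‖u‖ * ((β + θ) * r) := by
          gcongr; exact (norm_sub_le w d).trans (by linarith)
      _ = ⟪u, d⟫ + (β + θ) * r * ‖u‖ := by ring
  have hsq : ‖w‖ ^ 2 ≤ (β * r) ^ 2 := pow_le_pow_left₀ (norm_nonneg w) hw 2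
  rw [norm_add_sq_real]
  linarith

theorem attack_loss_semi_smooth_general
    {E F : Type*} [NormedAddCommGroup E] [InnerProductSpace ℝ E]
    [FiniteDimensional ℝ E] [NormedAddCommGroup F] [InnerProductSpace ℝ F]
    (G : E → F) (g : F) (β θ₂ : ℝ)
    (hG : ContDiff ℝ 1 G)
    (hLip : ∀ x y : E, ‖G x - G y‖ ≤ β * ‖x - y‖)
    (hJ : ∀ x : E, ‖fderiv ℝ G x‖ ≤ θ₂) :
    ∀ x y : E,
      ‖G y - g‖ ^ 2
        ≤ ‖G x - g‖ ^ 2 + ⟪gradient (fun z => ‖G z - g‖ ^ 2) x, y - x⟫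
          + β ^ 2 * ‖y - x‖ ^ 2
          + 2 * (β + θ₂) * ‖y - x‖ * Real.sqrt (‖G x - g‖ ^ 2) := by
  intro x y
  have hincr : ‖G y - G x‖ ≤ β * ‖y - x‖ := by
    simpa only [norm_sub_rev] using hLip y x
  have hlin : ‖fderiv ℝ G x (y - x)‖ ≤ θ₂ * ‖y - x‖ :=
    (fderiv ℝ G x).le_of_opNorm_le (hJ x) _
  rw [inner_gradient_norm_sub_sq (hG.differentiable one_ne_zero x),
    Real.sqrt_sq (norm_nonneg _)]
  have hsplit : G y - g = (G x - g) + (G y - G x) := by abel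
  rw [hsplit]
  exact norm_add_sq_le_of_norm_le hincr hlin

/-- If the weight-gradient map `G` is `β`-Lipschitz and its Jacobian has operator
norm at most `θ₂`, then the attack loss `L(x) = ‖G x − g‖²` is
`(2(β + θ₂), β², 1/2)`-semi-smooth. -/
theorem attack_loss_semi_smooth
    {E F : Type*} [NormedAddCommGroup E] [InnerProductSpace ℝ E]
    [FiniteDimensional ℝ E] [NormedAddCommGroup F] [InnerProductSpace ℝ F]
    [FiniteDimensional ℝ F]
    (G : E → F) (g : F) (β θ₂ : ℝ)
    (hG : ContDiff ℝ 1 G)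
    (hLip : ∀ x y : E, ‖G x - G y‖ ≤ β * ‖x - y‖)
    (hJ : ∀ x : E, ‖fderiv ℝ G x‖ ≤ θ₂) :
    ∀ x y : E,
      ‖G y - g‖ ^ 2
        ≤ ‖G x - g‖ ^ 2 + ⟪gradient (fun z => ‖G z - g‖ ^ 2) x, y - x⟫
          + β ^ 2 * ‖y - x‖ ^ 2
          + 2 * (β + θ₂) * ‖y - x‖ * Real.sqrt (‖G x - g‖ ^ 2) :=
  attack_loss_semi_smooth_general G g β θ₂ hG hLip hJ
end

section
/- Let L : ℝ^m → ℝ be differentiable with ∇L(x*) = 0, and suppose L is (c, d, p)-semi-strongly convex, has (α, β, p)-semi-Lipschitz gradient, and is (θ₁, θ₂)-non-critical-point with θ₁ > α^{1/p} and d > (c^{1/(2p)}/(θ₁(θ₁ − α)^{1/p}))·(β² + (α/θ₁^p)^{1/(1−p)}) + c^{1/(2−2p)}. Define ζ = (θ₁/(θ₁ − α^{1/p}))·(β² + (α/θ₁^p)^{1/(1−p)}) and ξ = 2(d − c^{1/(2p)}·θ₁^{−2}·ζ − c^{1/(2−2p)}). Run gradient descent x_{t+1} = x_t − η∇L(x_t)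 with 0 < η ≤ ξ/(2ζ). Then for every t, ‖x_{t+1} − x*‖² ≤ (1 − ξη/2)·‖x_t − x*‖². -/
open scoped RealInnerProductSpace


lemma young_two {p u v : ℝ} (hp0 : 0 < p) (hp1 : p < 1) (hu : 0 ≤ u) (hv : 0 ≤ v) :
    u ^ (1 - p) * v ^ p ≤ u + v := by
  have h := Real.geom_mean_le_arith_mean2_weighted (by linarith : (0:ℝ) ≤ 1 - p) hp0.le hu hv
    (by ring)
  nlinarith [mul_nonneg hp0.le hu, mul_nonneg (by linarith : (0:ℝ) ≤ 1 - p) hv]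

lemma rpow_split {p r Lt K A B : ℝ} (hp0 : 0 < p) (hp1 : p < 1) (hr : 0 ≤ r)
    (hL : 0 ≤ Lt) (hA : 0 ≤ A) (hB : 0 ≤ B)
    (hK : A ^ (1 - p) * B ^ p = K) :
    K * (r ^ (2 - 2*p) * Lt ^ p) ≤ A * r ^ 2 + B * Lt := by
  have e0 : ((r:ℝ) ^ (2:ℕ)) ^ (1 - p) = r ^ (2 - 2*p) := by
    rw [← Real.rpow_natCast r 2, ← Real.rpow_mul hr]
    norm_num
    ring_nf
  have e1 : (A * r ^ 2) ^ (1 - p) = A ^ (1-p) * r ^ (2 - 2*p) := by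
    rw [Real.mul_rpow hA (by positivity), e0]
  have e2 : (B * Lt) ^ p = B ^ p * Lt ^ p := Real.mul_rpow hB hL
  calc K * (r ^ (2 - 2*p) * Lt ^ p) = (A * r ^ 2) ^ (1 - p) * (B * Lt) ^ p := by
        rw [e1, e2, ← hK]; ring
    _ ≤ A * r ^ 2 + B * Lt :=
        young_two hp0 hp1 (by positivity) (mul_nonneg hB hL)

set_option maxHeartbeats 1000000 in
/-- Linear convergence of the gradient-descent iterates to the optimum for a
semi-strongly convex function with semi-Lipschitz gradient and a
non-critical-point condition. -/
theorem gd_iterate_convergence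
    {E : Type*} [NormedAddCommGroup E] [InnerProductSpace ℝ E]
    [FiniteDimensional ℝ E]
    (L : E → ℝ) (c d p α β θ₁ θ₂ η ζ ξ : ℝ)
    (hdiff : Differentiable ℝ L)
    (hp : p ∈ Set.Ioo (0 : ℝ) 1)
    (hc : 0 ≤ c) (hα : 0 ≤ α) (hβ : 0 ≤ β) (hθ₁ : 0 < θ₁)
    (xstar : E) (hcrit : gradient L xstar = 0)
    (hssc : ∀ x y : E, L x ≥ L y + ⟪gradient L y, x - y⟫ + d * ‖x - y‖ ^ 2
      - c * ‖x - y‖ ^ (2 - 2 * p) * L y ^ p)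
    (hsl : ∀ x y : E, ‖gradient L x - gradient L y‖ ^ 2
      ≤ β ^ 2 * ‖x - y‖ ^ 2 + α ^ 2 * ‖x - y‖ ^ (2 - 2 * p) * L x ^ p)
    (hncp : ∀ x : E, θ₁ ^ 2 * L x ≤ ‖gradient L x‖ ^ 2 ∧
      ‖gradient L x‖ ^ 2 ≤ θ₂ ^ 2 * L x)
    (hθα : θ₁ > α ^ (1 / p))
    (hd : d > c ^ (1 / (2 * p)) / (θ₁ * (θ₁ - α) ^ (1 / p))
        * (β ^ 2 + (α / θ₁ ^ p) ^ (1 / (1 - p))) + c ^ (1 / (2 - 2 * p)))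
    (hζ : ζ = θ₁ / (θ₁ - α ^ (1 / p)) * (β ^ 2 + (α / θ₁ ^ p) ^ (1 / (1 - p))))
    (hξ : ξ = 2 * (d - c ^ (1 / (2 * p)) / θ₁ ^ 2 * ζ - c ^ (1 / (2 - 2 * p))))
    (x : ℕ → E)
    (hiter : ∀ t : ℕ, x (t + 1) = x t - η • gradient L (x t))
    (hη0 : 0 < η) (hη : η ≤ ξ / (2 * ζ)) :
    ∀ t : ℕ, ‖x (t + 1) - xstar‖ ^ 2 ≤ (1 - ξ * η / 2) * ‖x t - xstar‖ ^ 2 := by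
  obtain ⟨hp0, hp1⟩ := hp
  have hp1' : (0:ℝ) < 1 - p := by linarith
  have hα1p : (0:ℝ) ≤ α ^ (1 / p) := Real.rpow_nonneg hα _
  have hden : 0 < θ₁ - α ^ (1 / p) := by linarith
  have hθp : (0:ℝ) < θ₁ ^ p := Real.rpow_pos_of_pos hθ₁ p
  have ha0 : (0:ℝ) ≤ (α / θ₁ ^ p) ^ (1 / (1 - p)) :=
    Real.rpow_nonneg (div_nonneg hα hθp.le) _
  have hζ0 : 0 ≤ ζ := by
    rw [hζ]
    have : (0:ℝ) ≤ β ^ 2 + (α / θ₁ ^ p) ^ (1 / (1 - p)) := by positivity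
    positivity
  have hζpos : 0 < ζ := by
    rcases hζ0.lt_or_eq with h | h
    · exact h
    · exfalso; rw [← h] at hη; simp at hη; linarith
  have hηζ : η * ζ ≤ ξ / 2 := by
    rw [le_div_iff₀ (by positivity : (0:ℝ) < 2 * ζ)] at hη
    linarith
  have hc1 : (0:ℝ) ≤ c ^ (1 / (2 * p)) := Real.rpow_nonneg hc _
  have hc2 : (0:ℝ) ≤ c ^ (1 / (2 - 2 * p)) := Real.rpow_nonneg hc _
  intro t
  by_cases hθ₂0 : θ₂ = 0
  · -- degenerate case: gradient is identically zero
    have hgz : ∀ y : E, gradient L y = 0 := by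
      intro y
      have h := (hncp y).2
      rw [hθ₂0] at h
      have h2 : ‖gradient L y‖ ^ 2 = 0 := le_antisymm (by simpa using h) (by positivity)
      have := pow_eq_zero_iff (two_ne_zero) |>.mp h2
      exact norm_eq_zero.mp this
    rw [hiter t, hgz (x t), smul_zero, sub_zero]
    rcases subsingleton_or_nontrivial E with hE | hE
    · have : x t - xstar = 0 := Subsingleton.elim _ _
      rw [this]
      simp
    · exfalso
      have hξpos : 0 < ξ := by nlinarith
      have hdpos : 0 < d := by
        have h1 : 0 ≤ c ^ (1 / (2 * p)) / θ₁ ^ 2 * ζ := by positivity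
        linarith [hξ]
      -- L is constant
      have hfd : ∀ z : E, fderiv ℝ L z = 0 := by
        intro z
        have h := hgz z
        have : (LinearIsometryEquiv.symm (InnerProductSpace.toDual ℝ E)) (fderiv ℝ L z) = 0 := h
        exact (LinearIsometryEquiv.map_eq_zero_iff _).mp this
      have hconst : ∀ y : E, L y = L xstar :=
        fun y => is_const_of_fderiv_eq_zero hdiff hfd y xstar
      set k := L xstar with hk
      have hkey : ∀ w : E, d * ‖w‖ ^ 2 ≤ c * ‖w‖ ^ (2 - 2*p) * k ^ p := by
        intro w
        have h := hssc (xstar + w) xstar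
        rw [hcrit, hconst (xstar + w), add_sub_cancel_left] at h
        simp only [inner_zero_left] at h
        linarith
      obtain ⟨v, hv⟩ := exists_ne (0 : E)
      have hvn : 0 < ‖v‖ := norm_pos_iff.mpr hv
      have hw : ∀ s : ℝ, 0 ≤ s → ∃ w : E, ‖w‖ = s := by
        intro s hs
        refine ⟨(s / ‖v‖) • v, ?_⟩
        rw [norm_smul, Real.norm_eq_abs, abs_of_nonneg (by positivity),
          div_mul_cancel₀ _ hvn.ne']
      obtain ⟨w1, hw1⟩ := hw 1 zero_le_one
      have hK1 := hkey w1
      rw [hw1, Real.one_rpow, one_pow] at hK1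
      -- hK1 : d ≤ c * 1 * k ^ p
      set K := c * k ^ p with hKdef
      have hKd : d ≤ K := by rw [hKdef]; linarith
      have hKpos : 0 < K := lt_of_lt_of_le hdpos hKd
      have hbase : 0 < 2 * K / d := by positivity
      set R := (2 * K / d) ^ (1 / (2 * p)) with hR
      have hRpos : 0 < R := Real.rpow_pos_of_pos hbase _
      obtain ⟨w2, hw2⟩ := hw R hRpos.le
      have hK2 := hkey w2
      rw [hw2] at hK2
      have hR2p : R ^ (2 * p) = 2 * K / d := by
        rw [hR, ← Real.rpow_mul hbase.le, one_div,
          inv_mul_cancel₀ (by positivity : (2:ℝ) * p ≠ 0), Real.rpow_one]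
      have hRsq : (R:ℝ) ^ (2:ℕ) = R ^ (2 - 2*p) * R ^ (2*p) := by
        rw [← Real.rpow_add hRpos, ← Real.rpow_natCast R 2]
        norm_num
      rw [hRsq, hR2p] at hK2
      have hRexp : 0 < R ^ (2 - 2*p) := Real.rpow_pos_of_pos hRpos _
      have e1 : d * (R ^ (2 - 2*p) * (2 * K / d)) = 2 * K * R ^ (2 - 2*p) := by
        field_simp
      have e2 : c * R ^ (2 - 2*p) * k ^ p = K * R ^ (2 - 2*p) := by
        rw [hKdef]; ring
      rw [e1, e2] at hK2
      linarith [mul_pos hKpos hRexp]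
  · -- main case: θ₂ ≠ 0, hence L ≥ 0 everywhere
    have hθ₂sq : 0 < θ₂ ^ 2 := by
      have : θ₂ ≠ 0 := hθ₂0
      positivity
    have hLnn : ∀ y : E, 0 ≤ L y := by
      intro y
      have h := (hncp y).2
      nlinarith [sq_nonneg ‖gradient L y‖]
    have hLs : L xstar = 0 := by
      have h1 := (hncp xstar).1
      rw [hcrit] at h1
      simp at h1
      nlinarith [hLnn xstar, pow_pos hθ₁ 2]
    have hr0 : (0:ℝ) ≤ ‖x t - xstar‖ := norm_nonneg _
    have hLt0 : 0 ≤ L (x t) := hLnn (x t)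
    -- inequality 1: lower bound on the inner product
    have h1 : L (x t) + d * ‖x t - xstar‖ ^ 2 - c * (‖x t - xstar‖ ^ (2 - 2*p) * L (x t) ^ p) ≤ ⟪gradient L (x t), x t - xstar⟫ := by
      have h := hssc xstar (x t)
      rw [norm_sub_rev, hLs] at h
      have hip : (xstar - x t) = -(x t - xstar) := (neg_sub _ _).symm
      rw [hip, inner_neg_right] at h
      linarith [h]
    -- inequality 2: bound on the gradient norm
    have h2 : ‖gradient L (x t)‖ ^ 2 ≤ β ^ 2 * ‖x t - xstar‖ ^ 2 + α ^ 2 * (‖x t - xstar‖ ^ (2 - 2*p) * L (x t) ^ p) := by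
      have h := hsl (x t) xstar
      rw [hcrit, sub_zero] at h
      linarith [h]
    -- Young inequality A
    have hKA : ((α / θ₁ ^ p) ^ (1 / (1 - p))) ^ (1 - p) * (θ₁ * α ^ (1/p)) ^ p = α ^ 2 := by
      have e1 : ((α / θ₁ ^ p) ^ (1 / (1 - p))) ^ (1 - p) = α / θ₁ ^ p := by
        rw [← Real.rpow_mul (div_nonneg hα hθp.le), one_div,
          inv_mul_cancel₀ hp1'.ne', Real.rpow_one]
      have e2 : (θ₁ * α ^ (1/p)) ^ p = θ₁ ^ p * α := by
        rw [Real.mul_rpow hθ₁.le hα1p, ← Real.rpow_mul hα, one_div,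
          inv_mul_cancel₀ hp0.ne', Real.rpow_one]
      rw [e1, e2]
      field_simp
    have h3 : α ^ 2 * (‖x t - xstar‖ ^ (2 - 2*p) * L (x t) ^ p)
        ≤ (α / θ₁ ^ p) ^ (1 / (1 - p)) * ‖x t - xstar‖ ^ 2 + (θ₁ * α ^ (1/p)) * L (x t) :=
      rpow_split hp0 hp1 hr0 hLt0 ha0 (by positivity) hKA
    -- Young inequality B
    have hexp1 : (1 / (2 - 2*p)) * (1 - p) = 1/2 := by
      rw [div_mul_eq_mul_div, one_mul, div_eq_div_iff (by linarith) (by norm_num)]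
      ring
    have hexp2 : (1 / (2 * p)) * p = 1/2 := by
      rw [div_mul_eq_mul_div, one_mul, div_eq_div_iff (by positivity) (by norm_num)]
      ring
    have hKB : (c ^ (1 / (2 - 2*p))) ^ (1 - p) * (c ^ (1 / (2 * p))) ^ p = c := by
      rw [← Real.rpow_mul hc, ← Real.rpow_mul hc, hexp1, hexp2,
        ← Real.rpow_add' hc (by norm_num : (1/2:ℝ) + 1/2 ≠ 0)]
      norm_num
    have h4 : c * (‖x t - xstar‖ ^ (2 - 2*p) * L (x t) ^ p)
        ≤ c ^ (1 / (2 - 2*p)) * ‖x t - xstar‖ ^ 2 + c ^ (1 / (2 * p)) * L (x t) :=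
      rpow_split hp0 hp1 hr0 hLt0 hc2 hc1 hKB
    -- bound on L (x t)
    have hζeq : ζ * (θ₁ - α ^ (1/p)) = θ₁ * (β ^ 2 + (α / θ₁ ^ p) ^ (1 / (1 - p))) := by
      rw [hζ]
      field_simp
    have h5 : θ₁ ^ 2 * L (x t) ≤ ζ * ‖x t - xstar‖ ^ 2 := by
      have hn1 := (hncp (x t)).1
      have hh : θ₁ * (θ₁ - α ^ (1/p)) * L (x t)
          ≤ (β ^ 2 + (α / θ₁ ^ p) ^ (1 / (1 - p))) * ‖x t - xstar‖ ^ 2 := by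
        nlinarith [hn1, h2, h3]
      nlinarith [mul_le_mul_of_nonneg_left hh hθ₁.le, hζeq, hden, hθ₁]
    -- gradient norm bound via ζ
    have hG : ‖gradient L (x t)‖ ^ 2 ≤ ζ * ‖x t - xstar‖ ^ 2 := by
      have hζeq2 : θ₁ * (ζ * (θ₁ - α ^ (1/p)))
          = θ₁ * (θ₁ * (β ^ 2 + (α / θ₁ ^ p) ^ (1 / (1 - p)))) := by rw [hζeq]
      nlinarith [mul_le_mul_of_nonneg_left h2 (sq_nonneg θ₁),
        mul_le_mul_of_nonneg_left h3 (sq_nonneg θ₁),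
        mul_le_mul_of_nonneg_left h5 (mul_nonneg hθ₁.le hα1p),
        hζeq2, sq_nonneg θ₁, hθ₁, hden]
    -- inner product bound via ξ
    have hξθ : ξ * θ₁ ^ 2 = 2 * (d * θ₁ ^ 2 - c ^ (1 / (2 * p)) * ζ
        - c ^ (1 / (2 - 2 * p)) * θ₁ ^ 2) := by
      rw [hξ]
      field_simp
    have hξθr : ξ * θ₁ ^ 2 * ‖x t - xstar‖ ^ 2 = 2 * (d * θ₁ ^ 2 - c ^ (1 / (2 * p)) * ζ
        - c ^ (1 / (2 - 2 * p)) * θ₁ ^ 2) * ‖x t - xstar‖ ^ 2 := by rw [hξθ]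
    have hIθ : (ξ / 2 * ‖x t - xstar‖ ^ 2) * θ₁ ^ 2
        ≤ ⟪gradient L (x t), x t - xstar⟫ * θ₁ ^ 2 := by
      linarith [mul_le_mul_of_nonneg_left h1 (sq_nonneg θ₁),
        mul_le_mul_of_nonneg_left h4 (sq_nonneg θ₁),
        mul_le_mul_of_nonneg_left h5 hc1,
        hξθr, mul_nonneg (sq_nonneg θ₁) hLt0]
    have hI : ξ / 2 * ‖x t - xstar‖ ^ 2 ≤ ⟪gradient L (x t), x t - xstar⟫ :=
      le_of_mul_le_mul_right hIθ (pow_pos hθ₁ 2)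
    -- expand the iterate
    rw [hiter t, sub_right_comm]
    have hexp : ‖x t - xstar - η • gradient L (x t)‖ ^ 2
        = ‖x t - xstar‖ ^ 2 - 2 * (η * ⟪gradient L (x t), x t - xstar⟫) + η ^ 2 * ‖gradient L (x t)‖ ^ 2 := by
      rw [norm_sub_sq_real, real_inner_smul_right, real_inner_comm, norm_smul,
        Real.norm_eq_abs, mul_pow, sq_abs]
    rw [hexp]
    linarith [mul_le_mul_of_nonneg_left hI hη0.le,
      mul_le_mul_of_nonneg_left hG (sq_nonneg η),
      mul_le_mul_of_nonneg_right hηζ (mul_nonneg hη0.le (sq_nonneg ‖x t - xstar‖)),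
      sq_nonneg ‖x t - xstar‖, hη0]
end

section
/- Let p ∈ (0,1) and let L : ℝ^m → ℝ be a nonnegative differentiable function whose gradient is (α, β, p)-semi-Lipschitz. Then L is (α, β/2, p/2)-semi-smooth: for all x, y ∈ ℝ^m, L(y) ≤ L(x) + ⟨∇L(x), y − x⟩ + (β/2)‖y − x‖² + α‖x − y‖^{2−p} L(x)^{p/2}. -/
/-!
Write `v = y - x`. Since `√(A² + B²) ≤ A + B`, the semi-Lipschitz bound between `x` and
`x + t • v` gives `‖∇L (x + t • v) - ∇L x‖ ≤ β t ‖v‖ + α (t ‖v‖) ^ (1 - p) L(x) ^ (p / 2)`.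
Pairing with `v` and using `t ^ (1 - p) ≤ 1` on `[0, 1]`, the derivative of `t ↦ L (x + t • v)`
is at most `⟪∇L x, v⟫ + β ‖v‖² t + α ‖v‖ ^ (2 - p) L(x) ^ (p / 2)`; integrating this affine
bound over `[0, 1]` gives the claim.
-/

open scoped RealInnerProductSpace

open Set

theorem le_add_mul_rpow_of_sq_le {r d ℓ α β p : ℝ} (hd : 0 ≤ d) (hℓ : 0 ≤ ℓ)
    (hα : 0 ≤ α) (hβ : 0 ≤ β)
    (h : r ^ 2 ≤ β ^ 2 * d ^ 2 + α ^ 2 * d ^ (2 - 2 * p) * ℓ ^ p) :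
    r ≤ β * d + α * d ^ (1 - p) * ℓ ^ (p / 2) := by
  have hsq : (α * d ^ (1 - p) * ℓ ^ (p / 2)) ^ 2 = α ^ 2 * d ^ (2 - 2 * p) * ℓ ^ p := by
    rw [mul_pow, mul_pow, ← Real.rpow_mul_natCast hd, ← Real.rpow_mul_natCast hℓ]
    ring_nf
  have hB : 0 ≤ α * d ^ (1 - p) * ℓ ^ (p / 2) := by positivity
  have hsum : r ^ 2 ≤ (β * d + α * d ^ (1 - p) * ℓ ^ (p / 2)) ^ 2 := by
    nlinarith [mul_nonneg (mul_nonneg hβ hd) hB]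
  exact (le_abs_self r).trans (abs_le_of_sq_le_sq hsum (by positivity))

theorem sub_le_of_hasDerivAt_le_affine {f f' : ℝ → ℝ} {a c : ℝ}
    (hf : ∀ t ∈ Icc (0 : ℝ) 1, HasDerivAt f (f' t) t)
    (hf' : ∀ t ∈ Ioo (0 : ℝ) 1, f' t ≤ a * t + c) :
    f 1 - f 0 ≤ a / 2 + c := by
  let g : ℝ → ℝ := fun t => f t - (a / 2 * t ^ 2 + c * t)
  have hg : ∀ t ∈ Icc (0 : ℝ) 1, HasDerivAt g (f' t - (a * t + c)) t := fun t ht => by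
    refine ((hf t ht).sub (((hasDerivAt_pow 2 t).const_mul (a / 2)).add
      ((hasDerivAt_id t).const_mul c))).congr_deriv ?_
    push_cast
    ring
  have hanti : AntitoneOn g (Icc 0 1) := by
    refine antitoneOn_of_hasDerivWithinAt_nonpos (f' := fun t => f' t - (a * t + c))
      (convex_Icc 0 1)
      (fun t ht => (hg t ht).continuousAt.continuousWithinAt) (fun t ht => ?_) (fun t ht => ?_)
    · rw [interior_Icc] at ht
      exact (hg t (Ioo_subset_Icc_self ht)).hasDerivWithinAt
    · rw [interior_Icc] at ht
      exact sub_nonpos.2 (hf' t ht)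
  have h10 : g 1 ≤ g 0 :=
    hanti (left_mem_Icc.2 zero_le_one) (right_mem_Icc.2 zero_le_one) zero_le_one
  simp only [g] at h10
  linarith

section InnerProductSpace

variable {E : Type*} [NormedAddCommGroup E] [InnerProductSpace ℝ E]

theorem inner_sub_le_of_sq_norm_sub_le {G : E → E} {x v : E} {ℓ α β p t : ℝ}
    (hℓ : 0 ≤ ℓ) (hα : 0 ≤ α) (hβ : 0 ≤ β) (hp : p ≤ 1)
    (hG : ∀ y, ‖G x - G y‖ ^ 2
      ≤ β ^ 2 * ‖x - y‖ ^ 2 + α ^ 2 * ‖x - y‖ ^ (2 - 2 * p) * ℓ ^ p)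
    (ht : t ∈ Icc (0 : ℝ) 1) :
    ⟪G (x + t • v) - G x, v⟫ ≤ β * ‖v‖ ^ 2 * t + α * ‖v‖ ^ (2 - p) * ℓ ^ (p / 2) := by
  have hnorm : ‖G (x + t • v) - G x‖
      ≤ β * (t * ‖v‖) + α * (t * ‖v‖) ^ (1 - p) * ℓ ^ (p / 2) := by
    have h := hG (x + t • v)
    rw [norm_sub_rev (G x), show x - (x + t • v) = -(t • v) by abel, norm_neg, norm_smul,
      Real.norm_of_nonneg ht.1] at h
    exact le_add_mul_rpow_of_sq_le (by positivity [ht.1]) hℓ hα hβ h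
  have hpow : (t * ‖v‖) ^ (1 - p) * ‖v‖ ≤ ‖v‖ ^ (2 - p) := calc
    (t * ‖v‖) ^ (1 - p) * ‖v‖ ≤ ‖v‖ ^ (1 - p) * ‖v‖ := by
      gcongr
      · exact mul_nonneg ht.1 (norm_nonneg v)
      · exact mul_le_of_le_one_left (norm_nonneg v) ht.2
    _ = ‖v‖ ^ (2 - p) := by
      rw [← Real.rpow_add_one' (norm_nonneg v) (by linarith)]
      ring_nf
  calc ⟪G (x + t • v) - G x, v⟫
      ≤ ‖G (x + t • v) - G x‖ * ‖v‖ := real_inner_le_norm _ _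
    _ ≤ (β * (t * ‖v‖) + α * (t * ‖v‖) ^ (1 - p) * ℓ ^ (p / 2)) * ‖v‖ := by gcongr
    _ = β * ‖v‖ ^ 2 * t + α * ((t * ‖v‖) ^ (1 - p) * ‖v‖) * ℓ ^ (p / 2) := by ring
    _ ≤ β * ‖v‖ ^ 2 * t + α * ‖v‖ ^ (2 - p) * ℓ ^ (p / 2) := by gcongr

theorem HasGradientAt.hasDerivAt_comp_add_smul [CompleteSpace E] {L : E → ℝ} {g x v : E} {t : ℝ}
    (h : HasGradientAt L g (x + t • v)) :
    HasDerivAt (fun s : ℝ => L (x + s • v)) ⟪g, v⟫ t := by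
  have hline : HasDerivAt (fun s : ℝ => x + s • v) v t := by
    simpa using ((hasDerivAt_id t).smul_const v).const_add x
  have hcomp := (hasGradientAt_iff_hasFDerivAt.1 h).comp_hasDerivAt t hline
  rwa [InnerProductSpace.toDual_apply_apply] at hcomp

end InnerProductSpace

/-- A nonnegative differentiable function with `(α, β, p)`-semi-Lipschitz gradient
is `(α, β/2, p/2)`-semi-smooth. -/
theorem semi_lipschitz_gradient_implies_semi_smooth
    {E : Type*} [NormedAddCommGroup E] [InnerProductSpace ℝ E]
    [FiniteDimensional ℝ E]
    (L : E → ℝ) (α β p : ℝ)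
    (hdiff : Differentiable ℝ L)
    (hp : p ∈ Set.Ioo (0 : ℝ) 1)
    (hα : 0 ≤ α) (hβ : 0 ≤ β)
    (hnonneg : ∀ x : E, 0 ≤ L x)
    (hsl : ∀ x y : E, ‖gradient L x - gradient L y‖ ^ 2
      ≤ β ^ 2 * ‖x - y‖ ^ 2 + α ^ 2 * ‖x - y‖ ^ (2 - 2 * p) * L x ^ p) :
    ∀ x y : E, L y ≤ L x + ⟪gradient L x, y - x⟫ + β / 2 * ‖y - x‖ ^ 2
      + α * ‖x - y‖ ^ (2 - p) * L x ^ (p / 2) := by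
  intro x y
  have hsegment := sub_le_of_hasDerivAt_le_affine
    (f := fun t => L (x + t • (y - x)))
    (f' := fun t => ⟪gradient L (x + t • (y - x)), y - x⟫)
    (a := β * ‖y - x‖ ^ 2)
    (c := ⟪gradient L x, y - x⟫ + α * ‖y - x‖ ^ (2 - p) * L x ^ (p / 2))
    (fun t _ => (hdiff _).hasGradientAt.hasDerivAt_comp_add_smul)
    (fun t ht => by
      have h := inner_sub_le_of_sq_norm_sub_le (v := y - x) (hnonneg x) hα hβ hp.2.le (hsl x)
        (Ioo_subset_Icc_self ht)
      rw [inner_sub_left] at h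
      linarith)
  simp only [one_smul, zero_smul, add_zero, add_sub_cancel] at hsegment
  rw [norm_sub_rev x y]
  linarith
end

section
/- Let b, n be positive integers and let R be a b × n random matrix whose entries are independent Gaussian random variables with mean 0 and variance 1/b. Then for any fixed vectors g, h ∈ ℝ^n, E[(gᵀRᵀRh)²] ≤ (gᵀh)² + (3/b)·‖g‖²·‖h‖². -/
/-!
Index the entries of `R` by `p = (i, j)` and write `X p = R i j`. Then `gᵀRᵀRh` is the quadratic
form `∑ A p q X p X q` with `A (i, j) (i', k) = [i = i'] g j h k`. For independent `N(0, v)`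
variables, Isserlis' formula `E[X p X q X r X s] = v² (δ_pq δ_rs + δ_pr δ_qs + δ_ps δ_qr)` gives
`E[(∑ A p q X p X q)²] = v² ((tr A)² + ‖A‖_F² + tr (A²))`, which for `v = 1/b` equals
`(gᵀh)² (1 + 1/b) + ‖g‖² ‖h‖² / b`; Cauchy–Schwarz finishes.
-/

open MeasureTheory ProbabilityTheory Real
open scoped NNReal ENNReal

lemma deriv_mul_exp_half_sq (c : ℝ) {q : ℝ → ℝ} {q' t : ℝ} (hq : HasDerivAt q q' t) :
    deriv (fun t ↦ q t * rexp (c * t ^ 2 / 2)) t = (q' + c * t * q t) * rexp (c * t ^ 2 / 2) := by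
  have h : HasDerivAt (fun t ↦ c * t ^ 2 / 2) (c * t) t :=
    (((hasDerivAt_pow 2 t).const_mul c).div_const 2).congr_deriv (by ring)
  rw [(hq.fun_mul h.exp).deriv]
  ring

lemma iteratedDeriv_four_exp_half_sq (c : ℝ) :
    iteratedDeriv 4 (fun t ↦ rexp (c * t ^ 2 / 2)) 0 = 3 * c ^ 2 := by
  have d1 : deriv (fun t ↦ rexp (c * t ^ 2 / 2)) = fun t ↦ c * t * rexp (c * t ^ 2 / 2) := by
    ext t
    simpa using deriv_mul_exp_half_sq (q := fun _ ↦ 1) c (hasDerivAt_const t 1)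
  have d2 : deriv (fun t ↦ c * t * rexp (c * t ^ 2 / 2))
      = fun t ↦ (c + c ^ 2 * t ^ 2) * rexp (c * t ^ 2 / 2) := by
    ext t
    rw [deriv_mul_exp_half_sq (q := fun t ↦ c * t) c ((hasDerivAt_id' t).const_mul c)]
    ring
  have d3 : deriv (fun t ↦ (c + c ^ 2 * t ^ 2) * rexp (c * t ^ 2 / 2))
      = fun t ↦ (3 * c ^ 2 * t + c ^ 3 * t ^ 3) * rexp (c * t ^ 2 / 2) := by
    ext t
    rw [deriv_mul_exp_half_sq (q := fun t ↦ c + c ^ 2 * t ^ 2) c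
      (((hasDerivAt_pow 2 t).const_mul (c ^ 2)).const_add c)]
    ring
  rw [iteratedDeriv_succ', iteratedDeriv_succ', iteratedDeriv_succ', iteratedDeriv_one, d1, d2, d3,
    deriv_mul_exp_half_sq (q := fun t ↦ 3 * c ^ 2 * t + c ^ 3 * t ^ 3) c
      (((hasDerivAt_id' 0).const_mul (3 * c ^ 2)).add ((hasDerivAt_pow 3 0).const_mul (c ^ 3)))]
  simp

lemma integral_sq_gaussianReal (v : ℝ≥0) : ∫ x, x ^ 2 ∂gaussianReal 0 v = v := by
  simpa [variance_eq_integral measurable_id'.aemeasurable] using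
    variance_fun_id_gaussianReal (μ := 0) (v := v)

lemma integral_pow_four_gaussianReal (v : ℝ≥0) : ∫ x, x ^ 4 ∂gaussianReal 0 v = 3 * v ^ 2 := by
  have h := iteratedDeriv_mgf_zero (X := fun x ↦ x) (μ := gaussianReal 0 v) (by simp) 4
  simp only [mgf_fun_id_gaussianReal, zero_mul, zero_add, Pi.pow_apply] at h
  rw [← h, iteratedDeriv_four_exp_half_sq]

instance : ENNReal.HolderTriple 4 4 2 :=
  ⟨by
    rw [← ENNReal.toReal_eq_toReal_iff' (by simp) (by simp), ENNReal.toReal_add (by simp) (by simp)]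
    norm_num⟩

namespace IndepGaussian

variable {ι Ω : Type*} [MeasurableSpace Ω] {μ : Measure Ω} {X : ι → Ω → ℝ} {v : ℝ≥0}
  (hX : ∀ p, HasLaw (X p) (gaussianReal 0 v) μ)
include hX

lemma integral_pow (p : ι) (k : ℕ) : ∫ ω, X p ω ^ k ∂μ = ∫ x, x ^ k ∂gaussianReal 0 v :=
  (hX p).integral_comp (f := fun x ↦ x ^ k) (by fun_prop)

lemma integrable_mul_mul_mul (p q r s : ι) :
    Integrable (fun ω ↦ X p ω * X q ω * X r ω * X s ω) μ := by
  have h4 : ∀ p, MemLp (X p) 4 μ := fun p ↦ (hX p).hasGaussianLaw.memLp (by norm_num)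
  have h2 : ∀ p q, MemLp (X p * X q) 2 μ := fun p q ↦ (h4 q).mul (h4 p)
  simpa only [Pi.mul_def, mul_assoc] using (h2 p q).integrable_mul (h2 r s)

variable (hindep : iIndepFun X μ)
include hindep

lemma integral_mul_mul_mul_eq_zero {p q r s : ι} (hp : s ≠ p) (hq : s ≠ q) (hr : s ≠ r) :
    ∫ ω, X p ω * X q ω * X r ω * X s ω ∂μ = 0 := by
  classical
  have hm := fun i ↦ (hX i).aemeasurable
  have h : IndepFun (fun ω ↦ X p ω * X q ω * X r ω) (X s) μ :=
    (hindep.indepFun_finset₀ {p, q, r} {s} (by simp [hp, hq, hr]) hm).comp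
      (φ := fun x : ({p, q, r} : Finset ι) → ℝ ↦ x ⟨p, by simp⟩ * x ⟨q, by simp⟩ * x ⟨r, by simp⟩)
      (by fun_prop)
      (measurable_pi_apply _ : Measurable fun y : ({s} : Finset ι) → ℝ ↦ y ⟨s, by simp⟩)
  rw [h.integral_fun_mul_eq_mul_integral (by fun_prop) (by fun_prop), (hX s).integral_eq,
    integral_id_gaussianReal, mul_zero]

lemma integral_mul_mul_mul_eq_sq_of_ne {p r : ι} (hpr : p ≠ r) :
    ∫ ω, X p ω * X p ω * X r ω * X r ω ∂μ = v ^ 2 := by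
  have hm := fun i ↦ (hX i).aemeasurable
  have h : IndepFun (fun ω ↦ X p ω ^ 2) (fun ω ↦ X r ω ^ 2) μ :=
    (hindep.indepFun hpr).comp (measurable_id.pow_const 2) (measurable_id.pow_const 2)
  calc ∫ ω, X p ω * X p ω * X r ω * X r ω ∂μ = ∫ ω, X p ω ^ 2 * X r ω ^ 2 ∂μ := by
        congr 1; ext ω; ring
    _ = v ^ 2 := by
      rw [h.integral_fun_mul_eq_mul_integral (by fun_prop) (by fun_prop), integral_pow hX,
        integral_pow hX, integral_sq_gaussianReal, sq]

lemma integral_mul_mul_mul [DecidableEq ι] (p q r s : ι) :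
    ∫ ω, X p ω * X q ω * X r ω * X s ω ∂μ =
      v ^ 2 * ((if p = q then 1 else 0) * (if r = s then 1 else 0)
        + (if p = r then 1 else 0) * (if q = s then 1 else 0)
        + (if p = s then 1 else 0) * (if q = r then 1 else 0)) := by
  -- if some index occurs once, the moment vanishes; otherwise the indices form one or two pairs
  have vanish := fun {a b c d : ι} ↦ integral_mul_mul_mul_eq_zero hX hindep (p := a) (q := b)
    (r := c) (s := d)
  by_cases hpq : p = q
  · subst hpq
    by_cases hrs : r = s
    · subst hrs
      by_cases hpr : p = r
      · subst hpr
        rw [show (fun ω ↦ X p ω * X p ω * X p ω * X p ω) = fun ω ↦ X p ω ^ 4 by ext; ring,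
          integral_pow hX, integral_pow_four_gaussianReal]
        simp only [if_true]
        ring
      · rw [integral_mul_mul_mul_eq_sq_of_ne hX hindep hpr]
        simp [hpr]
    · by_cases hpr : p = r
      · subst hpr
        rw [vanish (Ne.symm hrs) (Ne.symm hrs) (Ne.symm hrs)]
        simp [hrs]
      · rw [show (fun ω ↦ X p ω * X p ω * X r ω * X s ω) = fun ω ↦ X p ω * X p ω * X s ω * X r ω by
          ext; ring, vanish (Ne.symm hpr) (Ne.symm hpr) hrs]
        simp [hpr, hrs]
  · by_cases hpr : p = r
    · subst hpr
      by_cases hqs : q = s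
      · subst hqs
        rw [show (fun ω ↦ X p ω * X q ω * X p ω * X q ω) = fun ω ↦ X p ω * X p ω * X q ω * X q ω by
          ext; ring, integral_mul_mul_mul_eq_sq_of_ne hX hindep hpq]
        simp [hpq]
      · rw [show (fun ω ↦ X p ω * X q ω * X p ω * X s ω) = fun ω ↦ X p ω * X p ω * X s ω * X q ω by
          ext; ring, vanish (Ne.symm hpq) (Ne.symm hpq) hqs]
        simp [hpq, Ne.symm hpq, hqs]
    · by_cases hps : p = s
      · subst hps
        by_cases hqr : q = r
        · subst hqr
          rw [show (fun ω ↦ X p ω * X q ω * X q ω * X p ω) = fun ω ↦ X p ω * X p ω * X q ω * X q ω by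
            ext; ring, integral_mul_mul_mul_eq_sq_of_ne hX hindep hpq]
          simp [hpq]
        · rw [show (fun ω ↦ X p ω * X q ω * X r ω * X p ω) = fun ω ↦ X p ω * X r ω * X p ω * X q ω by
            ext; ring, vanish (Ne.symm hpq) hqr (Ne.symm hpq)]
          simp [hpq, hpr, hqr]
      · rw [show (fun ω ↦ X p ω * X q ω * X r ω * X s ω) = fun ω ↦ X q ω * X r ω * X s ω * X p ω by
          ext; ring, vanish hpq hpr hps]
        simp [hpq, hpr, hps]

lemma integral_sq_sum_sum_mul [Fintype ι] (A : ι → ι → ℝ) :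
    ∫ ω, (∑ p, ∑ q, A p q * (X p ω * X q ω)) ^ 2 ∂μ =
      v ^ 2 * ((∑ p, A p p) ^ 2 + ∑ p, ∑ q, A p q ^ 2 + ∑ p, ∑ q, A p q * A q p) := by
  classical
  have hint : ∀ p q r s,
      Integrable (fun ω ↦ A p q * A r s * (X p ω * X q ω * X r ω * X s ω)) μ :=
    fun p q r s ↦ (integrable_mul_mul_mul hX p q r s).const_mul _
  calc ∫ ω, (∑ p, ∑ q, A p q * (X p ω * X q ω)) ^ 2 ∂μ
      = ∫ ω, ∑ p, ∑ q, ∑ r, ∑ s, A p q * A r s * (X p ω * X q ω * X r ω * X s ω) ∂μ := by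
        congr 1; ext ω
        simp only [sq, Finset.sum_mul, Finset.mul_sum]
        ac_rfl
    _ = ∑ p, ∑ q, ∑ r, ∑ s, A p q * A r s * ∫ ω, X p ω * X q ω * X r ω * X s ω ∂μ := by
        simp (disch := intro _ _; fun_prop) only [integral_finsetSum, integral_const_mul]
    _ = _ := by
        simp only [integral_mul_mul_mul hX hindep, mul_add, Finset.sum_add_distrib, mul_ite,
          mul_one, mul_zero, Finset.sum_ite_eq, Finset.mem_univ, if_true, ← Finset.mul_sum,
          ← Finset.sum_mul, Finset.sum_ite_irrel, Finset.sum_const_zero, sq]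
        ring

end IndepGaussian

lemma integral_sq_sum_mul_sum_of_gaussian {κ ι Ω : Type*} [Fintype κ] [Fintype ι]
    [MeasurableSpace Ω] {μ : Measure Ω} {v : ℝ≥0} (R : Ω → Matrix κ ι ℝ)
    (hR : ∀ i j, HasLaw (fun ω ↦ R ω i j) (gaussianReal 0 v) μ)
    (hindep : iIndepFun (fun (p : κ × ι) ω ↦ R ω p.1 p.2) μ) (g h : ι → ℝ) :
    ∫ ω, (∑ i, (∑ j, R ω i j * g j) * (∑ j, R ω i j * h j)) ^ 2 ∂μ =
      v ^ 2 * (Fintype.card κ ^ 2 * (∑ j, g j * h j) ^ 2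
        + Fintype.card κ * ((∑ j, g j ^ 2) * (∑ j, h j ^ 2) + (∑ j, g j * h j) ^ 2)) := by
  classical
  set X : κ × ι → Ω → ℝ := fun p ω ↦ R ω p.1 p.2 with hX
  set A : κ × ι → κ × ι → ℝ := fun p q ↦ if p.1 = q.1 then g p.2 * h q.2 else 0 with hA
  have hexpand : ∀ ω, ∑ i, (∑ j, R ω i j * g j) * (∑ j, R ω i j * h j) =
      ∑ p, ∑ q, A p q * (X p ω * X q ω) := by
    intro ω
    simp only [Finset.sum_mul_sum, hA, hX, ite_mul, zero_mul, Fintype.sum_prod_type,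
      Finset.sum_ite_irrel, Finset.sum_const_zero, Finset.sum_ite_eq, Finset.mem_univ, if_true]
    ac_rfl
  have hsq : ∑ j, ∑ k, (g j * h k) ^ 2 = (∑ j, g j ^ 2) * (∑ j, h j ^ 2) := by
    simp only [mul_pow, Finset.sum_mul_sum]
  have hswap : ∑ j, ∑ k, g j * h k * (g k * h j) = (∑ j, g j * h j) ^ 2 := by
    simp only [sq, Finset.sum_mul_sum]
    exact Finset.sum_congr rfl fun j _ ↦ Finset.sum_congr rfl fun k _ ↦ by ring
  simp_rw [hexpand]
  rw [IndepGaussian.integral_sq_sum_sum_mul (fun p ↦ hR p.1 p.2) hindep A]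
  congr 1
  simp only [hA, if_true, Fintype.sum_prod_type, Finset.sum_const, Finset.card_univ, nsmul_eq_mul,
    ite_pow, ne_eq, OfNat.ofNat_ne_zero, not_false_eq_true, zero_pow, Finset.sum_ite_irrel,
    Finset.sum_ite_eq, Finset.mem_univ, hsq, mul_ite, ite_mul, zero_mul,
    mul_zero, Finset.sum_ite_eq', hswap]
  ring

theorem gaussian_sketch_second_moment_general
    {b n : ℕ} (hb : 0 < b)
    {Ω : Type*} [MeasurableSpace Ω] (μ : Measure Ω)
    (R : Ω → Matrix (Fin b) (Fin n) ℝ)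
    (hmeas : ∀ i j, Measurable fun ω => R ω i j)
    (hindep : iIndepFun
      (fun (p : Fin b × Fin n) ω => R ω p.1 p.2) μ)
    (hgauss : ∀ i j, Measure.map (fun ω => R ω i j) μ = gaussianReal 0 (b : ℝ≥0)⁻¹)
    (g h : Fin n → ℝ) :
    (∫ ω, (∑ i, (∑ j, R ω i j * g j) * (∑ j, R ω i j * h j)) ^ 2 ∂μ)
      ≤ (∑ j, g j * h j) ^ 2 + 3 / (b : ℝ) * (∑ j, g j ^ 2) * (∑ j, h j ^ 2) := by
  have hR : ∀ i j, HasLaw (fun ω ↦ R ω i j) (gaussianReal 0 (b : ℝ≥0)⁻¹) μ :=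
    fun i j ↦ ⟨(hmeas i j).aemeasurable, hgauss i j⟩
  rw [integral_sq_sum_mul_sum_of_gaussian R hR hindep, Fintype.card_fin]
  have hCS := Finset.sum_mul_sq_le_sq_mul_sq Finset.univ g h
  have hgh : 0 ≤ (∑ j, g j ^ 2) * ∑ j, h j ^ 2 := by positivity
  have hb' : (0 : ℝ) < b := by exact_mod_cast hb
  push_cast
  field_simp
  nlinarith

/-- Second-moment bound for Gaussian sketches: if `R` has i.i.d. `N(0, 1/b)` entries,
then `E[(gᵀRᵀRh)²] ≤ (gᵀh)² + (3/b)‖g‖²‖h‖²`. -/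
theorem gaussian_sketch_second_moment
    {b n : ℕ} (hb : 0 < b) (hn : 0 < n)
    {Ω : Type*} [MeasurableSpace Ω] (μ : Measure Ω) [IsProbabilityMeasure μ]
    (R : Ω → Matrix (Fin b) (Fin n) ℝ)
    (hmeas : ∀ i j, Measurable fun ω => R ω i j)
    (hindep : iIndepFun
      (fun (p : Fin b × Fin n) ω => R ω p.1 p.2) μ)
    (hgauss : ∀ i j, Measure.map (fun ω => R ω i j) μ = gaussianReal 0 (b : ℝ≥0)⁻¹)
    (g h : Fin n → ℝ) :
    (∫ ω, (∑ i, (∑ j, R ω i j * g j) * (∑ j, R ω i j * h j)) ^ 2 ∂μ)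
      ≤ (∑ j, g j * h j) ^ 2 + 3 / (b : ℝ) * (∑ j, g j ^ 2) * (∑ j, h j ^ 2) :=
  gaussian_sketch_second_moment_general hb μ R hmeas hindep hgauss g h
end
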